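/- arXiv:2602.24024 — 7 statements merged into one kernel-verified Lean document; each statement's English description precedes it below -/
import Mathlib

section
/- Let (M,d) be a pseudometric space, let w be a clone-robust graph weighting function, let α > 0, and let ν be a probability density function on ℝ supported in [0,α] and bounded above by ν̄ > 0. Then for every nonempty finite subset S ⊆ M and all x,y ∈ S, it holds that |f_{ν,w}(S)(x) − f_{ν,w}(S)(y)| ≤ 2·ν̄·|S|·d(x,y), where f_{ν,w}(S)(x) = ∫_0^α ν(r)·w(G_r(S))(x) dr. -/
open MeasureTheory

attribute [local instance] Classical.propDecidable

/-- The closed neighborhood of a vertex `x` in a graph `G`. -/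
def cNbhd {V : Type} (G : SimpleGraph V) (x : V) : Set V :=
  insert x (G.neighborSet x)

/-- The graph obtained from `G` by deleting the vertex `z`. -/
def deleteVert {V : Type} (G : SimpleGraph V) (z : V) : SimpleGraph {v : V // v ≠ z} :=
  SimpleGraph.comap (fun v => (v : V)) G

/-- A graph weighting function assigns to every finite simple graph a real weight
for each vertex. -/
def GraphWeight : Type 1 :=
  ∀ (V : Type) [Fintype V], SimpleGraph V → V → ℝ

/-- `w(G)` is a probability distribution on the vertices, for every finite graph `G`. -/
def IsProbWeight (w : GraphWeight) : Prop :=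
  ∀ (V : Type) [Fintype V] (G : SimpleGraph V),
    (∀ v : V, 0 ≤ w V G v) ∧ (∑ v : V, w V G v) = 1

/-- Symmetry: the weights are invariant under graph isomorphisms. -/
def WSymm (w : GraphWeight) : Prop :=
  ∀ (V V' : Type) [Fintype V] [Fintype V'] (G : SimpleGraph V) (G' : SimpleGraph V')
    (σ : G ≃g G') (x : V), w V' G' (σ x) = w V G x

/-- Locality: removing a vertex `z` that is equivalent to some other vertex `x`
(equal closed neighborhoods) does not change the weight of vertices outside the
closed neighborhood of `x`. -/
def WLocal (w : GraphWeight) : Prop :=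
  ∀ (V : Type) [Fintype V] (G : SimpleGraph V) (x z : V), x ≠ z →
    cNbhd G x = cNbhd G z →
    ∀ (y : V), y ∉ cNbhd G x →
    ∀ (hyz : y ≠ z),
      w {v : V // v ≠ z} (deleteVert G z) ⟨y, hyz⟩ = w V G y

/-- The `r`-neighborhood graph of a finite subset `S` of a pseudometric space:
two distinct points are adjacent iff their distance is at most `r`. -/
def nbhdGraph {M : Type} [PseudoMetricSpace M] (S : Finset M) (r : ℝ) :
    SimpleGraph {x : M // x ∈ S} where
  Adj u v := u ≠ v ∧ dist (u : M) (v : M) ≤ r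
  symm := by
    constructor
    intro u v h
    exact ⟨h.1.symm, by rw [dist_comm]; exact h.2⟩
  loopless := by
    constructor
    intro u h
    exact h.1 rfl

/-- The weighting function `f_{ν,w}` on finite subsets of a pseudometric space. -/
noncomputable def fWeight {M : Type} [PseudoMetricSpace M] (w : GraphWeight)
    (ν : ℝ → ℝ) (α : ℝ) (S : Finset M) (x : {x : M // x ∈ S}) : ℝ :=
  ∫ r in (0:ℝ)..α, ν r * w {x : M // x ∈ S} (nbhdGraph S r) x

open scoped ENNReal

lemma weight_le_one (w : GraphWeight) (hprob : IsProbWeight w) (V : Type) [Fintype V]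
    (G : SimpleGraph V) (v : V) : w V G v ≤ 1 := by
  obtain ⟨h0, h1⟩ := hprob V G
  calc w V G v ≤ ∑ u, w V G u := Finset.single_le_sum (fun u _ => h0 u) (Finset.mem_univ v)
    _ = 1 := h1

lemma weight_eq_of_cNbhd_eq (w : GraphWeight) (hsym : WSymm w) {V : Type} [Fintype V]
    (G : SimpleGraph V) (x y : V) (h : cNbhd G x = cNbhd G y) : w V G x = w V G y := by
  rcases eq_or_ne x y with rfl | hxy
  · rfl
  have hA : ∀ v, v ≠ x → v ≠ y → (G.Adj x v ↔ G.Adj y v) := by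
    intro v hvx hvy
    have := Set.ext_iff.mp h v
    simpa [cNbhd, SimpleGraph.mem_neighborSet, hvx, hvy] using this
  have key : ∀ u v, G.Adj u v → G.Adj (Equiv.swap x y u) (Equiv.swap x y v) := by
    intro u v huv
    rcases eq_or_ne u x with rfl | hux
    · rcases eq_or_ne v u with rfl | hvx
      · exact absurd rfl huv.ne
      rcases eq_or_ne v y with rfl | hvy
      · rw [Equiv.swap_apply_left, Equiv.swap_apply_right]
        exact huv.symm
      · rw [Equiv.swap_apply_left, Equiv.swap_apply_of_ne_of_ne hvx hvy]
        exact (hA v hvx hvy).mp huv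
    rcases eq_or_ne u y with rfl | huy
    · rcases eq_or_ne v x with rfl | hvx
      · rw [Equiv.swap_apply_right, Equiv.swap_apply_left]
        exact huv.symm
      rcases eq_or_ne v u with rfl | hvy
      · exact absurd rfl huv.ne
      · rw [Equiv.swap_apply_right, Equiv.swap_apply_of_ne_of_ne hvx hvy]
        exact (hA v hvx hvy).mpr huv
    · rw [Equiv.swap_apply_of_ne_of_ne hux huy]
      rcases eq_or_ne v x with rfl | hvx
      · rw [Equiv.swap_apply_left]
        exact ((hA u hux huy).mp huv.symm).symm
      rcases eq_or_ne v y with rfl | hvy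
      · rw [Equiv.swap_apply_right]
        exact ((hA u hux huy).mpr huv.symm).symm
      · rw [Equiv.swap_apply_of_ne_of_ne hvx hvy]
        exact huv
  have hmap : ∀ u v, G.Adj (Equiv.swap x y u) (Equiv.swap x y v) ↔ G.Adj u v := by
    intro u v
    constructor
    · intro h'
      have := key _ _ h'
      simpa using this
    · exact key u v
  have := hsym V V G G ⟨Equiv.swap x y, @fun u v => hmap u v⟩ x
  simpa [Equiv.swap_apply_left] using this.symm

lemma meas_w {M : Type} [PseudoMetricSpace M] (w : GraphWeight) (S : Finset M)
    (x : {x : M // x ∈ S}) :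
    Measurable fun r : ℝ => w {x : M // x ∈ S} (nbhdGraph S r) x := by
  have hfin : Finite (SimpleGraph {x : M // x ∈ S}) :=
    Finite.of_injective (fun G : SimpleGraph {x : M // x ∈ S} => G.Adj)
      fun a b hab => SimpleGraph.ext hab
  intro s _
  have hpre : (fun r : ℝ => w {x : M // x ∈ S} (nbhdGraph S r) x) ⁻¹' s =
      ⋃ (G : SimpleGraph {x : M // x ∈ S}) (_ : w {x : M // x ∈ S} G x ∈ s),
        {r : ℝ | nbhdGraph S r = G} := by
    ext r
    simp only [Set.mem_preimage, Set.mem_iUnion, Set.mem_setOf_eq]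
    constructor
    · intro h; exact ⟨nbhdGraph S r, h, rfl⟩
    · rintro ⟨G, hG, hGr⟩; rw [hGr]; exact hG
  rw [hpre]
  refine MeasurableSet.iUnion fun G => MeasurableSet.iUnion fun _ => ?_
  have heq : {r : ℝ | nbhdGraph S r = G} =
      ⋂ p : {x : M // x ∈ S} × {x : M // x ∈ S},
        {r : ℝ | ((p.1 ≠ p.2 ∧ dist (p.1 : M) (p.2 : M) ≤ r) ↔ G.Adj p.1 p.2)} := by
    ext r
    simp only [Set.mem_iInter, Set.mem_setOf_eq]
    constructor
    · rintro rfl p; exact Iff.rfl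
    · intro h
      ext u v
      exact h (u, v)
  rw [heq]
  refine MeasurableSet.iInter fun p => ?_
  by_cases hQ : G.Adj p.1 p.2
  · have hA : p.1 ≠ p.2 := hQ.ne
    have : {r : ℝ | ((p.1 ≠ p.2 ∧ dist (p.1 : M) (p.2 : M) ≤ r) ↔ G.Adj p.1 p.2)} =
        Set.Ici (dist (p.1 : M) (p.2 : M)) := by
      ext r; simp [hQ, hA]
    rw [this]; exact measurableSet_Ici
  · by_cases hA : p.1 = p.2
    · have : {r : ℝ | ((p.1 ≠ p.2 ∧ dist (p.1 : M) (p.2 : M) ≤ r) ↔ G.Adj p.1 p.2)} =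
          Set.univ := by
        ext r; simp [hQ, hA]
      rw [this]; exact MeasurableSet.univ
    · have : {r : ℝ | ((p.1 ≠ p.2 ∧ dist (p.1 : M) (p.2 : M) ≤ r) ↔ G.Adj p.1 p.2)} =
          Set.Iio (dist (p.1 : M) (p.2 : M)) := by
        ext r; simp [hQ, hA]
      rw [this]; exact measurableSet_Iio


/-- Lipschitz clone fairness of `f_{ν,w}`. -/
theorem fWeight_clone_fairness {M : Type} [PseudoMetricSpace M]
    (w : GraphWeight) (hprob : IsProbWeight w) (hsym : WSymm w) (hloc : WLocal w)
    (α : ℝ) (hα : 0 < α)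
    (ν : ℝ → ℝ) (hνmeas : Measurable ν) (hνnonneg : ∀ r, 0 ≤ ν r)
    (hνsupp : ∀ r, r ∉ Set.Icc (0:ℝ) α → ν r = 0)
    (hνint : (∫ r in (0:ℝ)..α, ν r) = 1)
    (νbar : ℝ) (hνbar : 0 < νbar) (hνle : ∀ r, ν r ≤ νbar)
    (S : Finset M) (hS : S.Nonempty) (x y : {x : M // x ∈ S}) :
    |fWeight w ν α S x - fWeight w ν α S y|
      ≤ 2 * νbar * (S.card : ℝ) * dist (x : M) (y : M) := by
  classical
  set D := dist (x : M) (y : M) with hDdef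
  have hD0 : 0 ≤ D := dist_nonneg
  set Bad : Set ℝ := ⋃ z : {x : M // x ∈ S},
      Set.Icc (min (dist (x : M) (z : M)) (dist (y : M) (z : M)))
              (max (dist (x : M) (z : M)) (dist (y : M) (z : M))) with hBadDef
  have hBadMeas : MeasurableSet Bad :=
    MeasurableSet.iUnion fun z => measurableSet_Icc
  -- outside Bad (and r ≥ 0) the two weights agree
  have hkey : ∀ r : ℝ, 0 ≤ r → r ∉ Bad →
      w {x : M // x ∈ S} (nbhdGraph S r) x = w {x : M // x ∈ S} (nbhdGraph S r) y := by
    intro r hr hrB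
    have hz : ∀ z : {x : M // x ∈ S},
        (dist (x : M) (z : M) ≤ r ↔ dist (y : M) (z : M) ≤ r) := by
      intro z
      have hnot : r ∉ Set.Icc (min (dist (x : M) (z : M)) (dist (y : M) (z : M)))
          (max (dist (x : M) (z : M)) (dist (y : M) (z : M))) :=
        fun h => hrB (Set.mem_iUnion.mpr ⟨z, h⟩)
      rcases lt_or_ge r (min (dist (x : M) (z : M)) (dist (y : M) (z : M))) with h | h
      · exact iff_of_false (not_le.mpr (lt_min_iff.mp h).1) (not_le.mpr (lt_min_iff.mp h).2)
      · have hmax : max (dist (x : M) (z : M)) (dist (y : M) (z : M)) < r := by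
          by_contra hc
          exact hnot ⟨h, not_lt.mp hc⟩
        exact iff_of_true (le_of_lt (lt_of_le_of_lt (le_max_left _ _) hmax))
          (le_of_lt (lt_of_le_of_lt (le_max_right _ _) hmax))
    rcases eq_or_ne x y with rfl | hxy
    · rfl
    have hxyr : dist (x : M) (y : M) ≤ r := (hz y).mpr (by simpa using hr)
    apply weight_eq_of_cNbhd_eq w hsym
    have hadj : ∀ u v : {x : M // x ∈ S},
        (nbhdGraph S r).Adj u v ↔ (u ≠ v ∧ dist (u : M) (v : M) ≤ r) := fun u v => Iff.rfl
    ext z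
    simp only [cNbhd, Set.mem_insert_iff, SimpleGraph.mem_neighborSet, hadj]
    constructor
    · rintro (rfl | ⟨hne, hd⟩)
      · exact Or.inr ⟨hxy.symm, by rw [dist_comm]; exact hxyr⟩
      · rcases eq_or_ne z y with rfl | hzy
        · exact Or.inl rfl
        · exact Or.inr ⟨hzy.symm, (hz z).mp hd⟩
    · rintro (rfl | ⟨hne, hd⟩)
      · exact Or.inr ⟨hxy, hxyr⟩
      · rcases eq_or_ne z x with rfl | hzx
        · exact Or.inl rfl
        · exact Or.inr ⟨hzx.symm, (hz z).mpr hd⟩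
  -- measure of the bad set
  have hvol : (volume (Set.Ioc 0 α ∩ Bad)).toReal ≤ (S.card : ℝ) * D := by
    have h1 : volume (Set.Ioc 0 α ∩ Bad) ≤ volume Bad :=
      measure_mono Set.inter_subset_right
    have h2 : volume Bad ≤ ∑ z : {x : M // x ∈ S},
        volume (Set.Icc (min (dist (x : M) (z : M)) (dist (y : M) (z : M)))
          (max (dist (x : M) (z : M)) (dist (y : M) (z : M)))) := by
      rw [hBadDef]
      exact (measure_iUnion_le _).trans (le_of_eq (tsum_fintype _))
    have h3 : ∀ z : {x : M // x ∈ S},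
        volume (Set.Icc (min (dist (x : M) (z : M)) (dist (y : M) (z : M)))
          (max (dist (x : M) (z : M)) (dist (y : M) (z : M)))) ≤ ENNReal.ofReal D := by
      intro z
      rw [Real.volume_Icc]
      apply ENNReal.ofReal_le_ofReal
      rw [max_sub_min_eq_abs, abs_sub_comm]
      exact abs_dist_sub_le (x : M) (y : M) (z : M)
    have h4 : volume (Set.Ioc 0 α ∩ Bad) ≤ ENNReal.ofReal ((S.card : ℝ) * D) := by
      calc volume (Set.Ioc 0 α ∩ Bad) ≤ _ := h1.trans h2
        _ ≤ ∑ _z : {x : M // x ∈ S}, ENNReal.ofReal D := Finset.sum_le_sum fun z _ => h3 z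
        _ = (S.card : ℝ≥0∞) * ENNReal.ofReal D := by
            rw [Finset.sum_const, Finset.card_univ, Fintype.card_coe, nsmul_eq_mul]
        _ = ENNReal.ofReal ((S.card : ℝ) * D) := by
            rw [ENNReal.ofReal_mul (by positivity)]
            congr 1
            simp [ENNReal.ofReal_natCast]
    exact ENNReal.toReal_le_of_le_ofReal (by positivity) h4
  -- integrability
  have hbound : ∀ (v : {x : M // x ∈ S}) (r : ℝ),
      |ν r * w {x : M // x ∈ S} (nbhdGraph S r) v| ≤ νbar := by
    intro v r
    obtain ⟨h0, -⟩ := hprob {x : M // x ∈ S} (nbhdGraph S r)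
    have hle1 := weight_le_one w hprob {x : M // x ∈ S} (nbhdGraph S r) v
    rw [abs_mul, abs_of_nonneg (hνnonneg r), abs_of_nonneg (h0 v)]
    calc ν r * w {x : M // x ∈ S} (nbhdGraph S r) v ≤ νbar * 1 :=
          mul_le_mul (hνle r) hle1 (h0 v) hνbar.le
      _ = νbar := mul_one _
  have hInt : ∀ v : {x : M // x ∈ S},
      IntegrableOn (fun r => ν r * w {x : M // x ∈ S} (nbhdGraph S r) v)
        (Set.Ioc 0 α) volume := by
    intro v
    refine Measure.integrableOn_of_bounded (M := νbar) measure_Ioc_lt_top.ne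
      ((hνmeas.mul (meas_w w S v)).aestronglyMeasurable) ?_
    exact Filter.Eventually.of_forall fun r => by
      rw [Real.norm_eq_abs]
      exact hbound v r
  -- rewrite the difference as one set integral
  have hsub : fWeight w ν α S x - fWeight w ν α S y =
      ∫ r in Set.Ioc 0 α, (ν r * w {x : M // x ∈ S} (nbhdGraph S r) x -
        ν r * w {x : M // x ∈ S} (nbhdGraph S r) y) := by
    rw [fWeight, fWeight, intervalIntegral.integral_of_le hα.le,
      intervalIntegral.integral_of_le hα.le, ← integral_sub (hInt x) (hInt y)]
  -- restrict to the bad set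
  have hEq : Set.EqOn
      (fun r => ν r * w {x : M // x ∈ S} (nbhdGraph S r) x -
        ν r * w {x : M // x ∈ S} (nbhdGraph S r) y)
      (Bad.indicator fun r => ν r * w {x : M // x ∈ S} (nbhdGraph S r) x -
        ν r * w {x : M // x ∈ S} (nbhdGraph S r) y)
      (Set.Ioc 0 α) := by
    intro r hr
    by_cases hb : r ∈ Bad
    · simp [Set.indicator_of_mem hb]
    · rw [Set.indicator_of_notMem hb]
      simp [hkey r hr.1.le hb]
  rw [hsub, setIntegral_congr_fun measurableSet_Ioc hEq, setIntegral_indicator hBadMeas]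
  have hfin : volume (Set.Ioc 0 α ∩ Bad) < ⊤ :=
    lt_of_le_of_lt (measure_mono Set.inter_subset_left) measure_Ioc_lt_top
  have hC : ∀ r ∈ Set.Ioc 0 α ∩ Bad,
      ‖ν r * w {x : M // x ∈ S} (nbhdGraph S r) x -
        ν r * w {x : M // x ∈ S} (nbhdGraph S r) y‖ ≤ 2 * νbar := by
    intro r _
    calc ‖ν r * w {x : M // x ∈ S} (nbhdGraph S r) x -
          ν r * w {x : M // x ∈ S} (nbhdGraph S r) y‖
        ≤ ‖ν r * w {x : M // x ∈ S} (nbhdGraph S r) x‖ +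
          ‖ν r * w {x : M // x ∈ S} (nbhdGraph S r) y‖ := norm_sub_le _ _
      _ ≤ νbar + νbar := by
          rw [Real.norm_eq_abs, Real.norm_eq_abs]
          exact add_le_add (hbound x r) (hbound y r)
      _ = 2 * νbar := by ring
  have hmeas' : AEStronglyMeasurable
      (fun r => ν r * w {x : M // x ∈ S} (nbhdGraph S r) x -
        ν r * w {x : M // x ∈ S} (nbhdGraph S r) y)
      (volume.restrict (Set.Ioc 0 α ∩ Bad)) :=
    (((hνmeas.mul (meas_w w S x)).sub
      (hνmeas.mul (meas_w w S y))).aestronglyMeasurable).restrict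
  have hnorm := norm_setIntegral_le_of_norm_le_const hfin hC
  rw [Real.norm_eq_abs] at hnorm
  calc |∫ r in Set.Ioc 0 α ∩ Bad,
        (ν r * w {x : M // x ∈ S} (nbhdGraph S r) x -
          ν r * w {x : M // x ∈ S} (nbhdGraph S r) y)|
      ≤ 2 * νbar * (volume (Set.Ioc 0 α ∩ Bad)).toReal := hnorm
    _ ≤ 2 * νbar * ((S.card : ℝ) * D) :=
        mul_le_mul_of_nonneg_left hvol (by positivity)
    _ = 2 * νbar * (S.card : ℝ) * D := by ring
end

section
/- Let (M,d) be a pseudometric space, let w be a clone-robust graph weighting function, let α > 0, and let ν be a probability density function on ℝ supported in [0,α] and bounded above by ν̄ > 0. Let S ⊆ M be a nonempty finite subset and let π : S → M be an injective map with image T = π(S). Then for every x ∈ S, |f_{ν,w}(S)(x) − f_{ν,w}(T)(π(x))| ≤ 2·ν̄·|S|²·max_{u∈S} d(u, π(u)), where f_{ν,w}(S)(x) = ∫_0^α ν(r)·w(G_r(S))(x) dr. -/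
open MeasureTheory

attribute [local instance] Classical.propDecidable

/-- The type of simple graphs on a finite vertex type is finite. -/
lemma finite_simpleGraph {V : Type} [Finite V] : Finite (SimpleGraph V) := by
  have hinj : Function.Injective (fun G : SimpleGraph V => G.Adj) := by
    intro G H h
    exact SimpleGraph.ext h
  exact Finite.of_injective _ hinj

/-- The weight of a fixed vertex in the `r`-neighborhood graph is a measurable
function of `r`. -/
lemma measurable_w_nbhd {M : Type} [PseudoMetricSpace M] (w : GraphWeight)
    (S : Finset M) (x : {x : M // x ∈ S}) :
    Measurable (fun r : ℝ => w {x : M // x ∈ S} (nbhdGraph S r) x) := by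
  haveI : Finite (SimpleGraph {x : M // x ∈ S}) := finite_simpleGraph
  haveI := Fintype.ofFinite (SimpleGraph {x : M // x ∈ S})
  have key : (fun r : ℝ => w {x : M // x ∈ S} (nbhdGraph S r) x)
      = fun r : ℝ => ∑ G : SimpleGraph {x : M // x ∈ S},
          if nbhdGraph S r = G then w {x : M // x ∈ S} G x else 0 := by
    funext r
    rw [Finset.sum_ite_eq Finset.univ (nbhdGraph S r)
      (fun G => w {x : M // x ∈ S} G x)]
    simp
  rw [key]
  apply Finset.measurable_sum
  intro G _
  have hfib : MeasurableSet {r : ℝ | nbhdGraph S r = G} := by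
    have heq : {r : ℝ | nbhdGraph S r = G}
        = ⋂ (u : {x : M // x ∈ S}) (v : {x : M // x ∈ S}),
            {r : ℝ | ((u ≠ v ∧ dist (u : M) (v : M) ≤ r) ↔ G.Adj u v)} := by
      ext r
      simp only [Set.mem_setOf_eq, Set.mem_iInter, SimpleGraph.ext_iff, funext_iff,
        eq_iff_iff]
      rfl
    rw [heq]
    refine MeasurableSet.iInter fun u => MeasurableSet.iInter fun v => ?_
    by_cases hP : u = v
    · subst hP
      by_cases hQ : G.Adj u u
      · exact absurd hQ (G.loopless.irrefl u)
      · have hset : {r : ℝ | ((u ≠ u ∧ dist (u : M) (u : M) ≤ r) ↔ G.Adj u u)}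
            = Set.univ := by
          ext r; simp [hQ]
        rw [hset]; exact MeasurableSet.univ
    · by_cases hQ : G.Adj u v
      · have hset : {r : ℝ | ((u ≠ v ∧ dist (u : M) (v : M) ≤ r) ↔ G.Adj u v)}
            = Set.Ici (dist (u : M) (v : M)) := by
          ext r; simp [hQ, hP]
        rw [hset]; exact measurableSet_Ici
      · have hset : {r : ℝ | ((u ≠ v ∧ dist (u : M) (v : M) ≤ r) ↔ G.Adj u v)}
            = Set.Iio (dist (u : M) (v : M)) := by
          ext r; simp [hQ, hP, not_le]
        rw [hset]; exact measurableSet_Iio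
  exact Measurable.ite hfib measurable_const measurable_const

/-- Lipschitz continuity of `f_{ν,w}`. -/
theorem fWeight_continuity {M : Type} [PseudoMetricSpace M]
    (w : GraphWeight) (hprob : IsProbWeight w) (hsym : WSymm w) (hloc : WLocal w)
    (α : ℝ) (hα : 0 < α)
    (ν : ℝ → ℝ) (hνmeas : Measurable ν) (hνnonneg : ∀ r, 0 ≤ ν r)
    (hνsupp : ∀ r, r ∉ Set.Icc (0:ℝ) α → ν r = 0)
    (hνint : (∫ r in (0:ℝ)..α, ν r) = 1)
    (νbar : ℝ) (hνbar : 0 < νbar) (hνle : ∀ r, ν r ≤ νbar)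
    (S : Finset M) (hS : S.Nonempty)
    (π : M → M) (hπ : Set.InjOn π (S : Set M))
    (x : M) (hx : x ∈ S) :
    |fWeight w ν α S ⟨x, hx⟩
        - fWeight w ν α (S.image π) ⟨π x, Finset.mem_image_of_mem π hx⟩|
      ≤ 2 * νbar * (S.card : ℝ) ^ 2 * S.sup' hS (fun u => dist u (π u)) := by
  classical
  set T : Finset M := S.image π with hTdef
  set ε : ℝ := S.sup' hS (fun u => dist u (π u)) with hεdef
  have hεu : ∀ u ∈ S, dist u (π u) ≤ ε := by
    intro u hu
    rw [hεdef]
    exact Finset.le_sup' (fun u => dist u (π u)) hu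
  have hε0 : (0:ℝ) ≤ ε := le_trans dist_nonneg (hεu x hx)
  -- weights are in [0,1]
  have hw01 : ∀ (V : Type) [Fintype V] (G : SimpleGraph V) (v : V),
      0 ≤ w V G v ∧ w V G v ≤ 1 := by
    intro V _ G v
    obtain ⟨h0, h1⟩ := hprob V G
    refine ⟨h0 v, ?_⟩
    calc w V G v ≤ ∑ u, w V G u :=
          Finset.single_le_sum (fun u _ => h0 u) (Finset.mem_univ v)
      _ = 1 := h1
  -- abbreviations
  set A : ℝ → ℝ := fun r => w {x : M // x ∈ S} (nbhdGraph S r) ⟨x, hx⟩ with hAdef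
  set C : ℝ → ℝ := fun r =>
    w {x : M // x ∈ T} (nbhdGraph T r) ⟨π x, Finset.mem_image_of_mem π hx⟩ with hCdef
  -- for good radii the two weights agree
  have hgoodeq : ∀ r : ℝ,
      (∀ u v : M, u ∈ S → v ∈ S → (dist u v ≤ r ↔ dist (π u) (π v) ≤ r)) →
      A r = C r := by
    intro r hr
    have hinj : Function.Injective
        (fun u : {x : M // x ∈ S} =>
          (⟨π u, Finset.mem_image_of_mem π u.2⟩ : {x : M // x ∈ T})) := by
      intro u v h
      exact Subtype.ext (hπ u.2 v.2 (by simpa [Subtype.ext_iff] using h))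
    have hsurj : Function.Surjective
        (fun u : {x : M // x ∈ S} =>
          (⟨π u, Finset.mem_image_of_mem π u.2⟩ : {x : M // x ∈ T})) := by
      rintro ⟨y, hy⟩
      obtain ⟨u, hu, rfl⟩ := Finset.mem_image.mp hy
      exact ⟨⟨u, hu⟩, rfl⟩
    let e := Equiv.ofBijective _ ⟨hinj, hsurj⟩
    let σ : nbhdGraph S r ≃g nbhdGraph T r :=
      { toEquiv := e
        map_rel_iff' := by
          intro u v
          show ((⟨π u, _⟩ : {x : M // x ∈ T}) ≠ ⟨π v, _⟩ ∧
              dist (π (u:M)) (π (v:M)) ≤ r) ↔ (u ≠ v ∧ dist (u:M) (v:M) ≤ r)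
          rw [← hr u v u.2 v.2]
          constructor
          · rintro ⟨h1, h2⟩
            refine ⟨fun h => h1 ?_, h2⟩
            subst h; rfl
          · rintro ⟨h1, h2⟩
            refine ⟨fun h => h1 (hinj h), h2⟩ }
    have := hsym {x : M // x ∈ S} {x : M // x ∈ T}
      (nbhdGraph S r) (nbhdGraph T r) σ ⟨x, hx⟩
    exact this.symm
  -- the bad set
  set B : Set ℝ := ⋃ p ∈ (S ×ˢ S : Finset (M × M)),
      Set.Icc (min (dist p.1 p.2) (dist (π p.1) (π p.2)))
        (min (dist p.1 p.2) (dist (π p.1) (π p.2)) + 2 * ε) with hBdef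
  have hBmeas : MeasurableSet B := by
    refine Set.Finite.measurableSet_biUnion (Finset.finite_toSet _)
      fun p _ => measurableSet_Icc
  have hnotB : ∀ r : ℝ, r ∉ B → ∀ u v : M, u ∈ S → v ∈ S →
      (dist u v ≤ r ↔ dist (π u) (π v) ≤ r) := by
    intro r hr u v hu hv
    by_contra hcon
    apply hr
    refine Set.mem_iUnion₂.mpr ⟨(u, v), Finset.mem_product.mpr ⟨hu, hv⟩, ?_⟩
    have t1 : dist (π u) (π v) ≤ dist (π u) u + dist u (π v) := dist_triangle _ _ _
    have t2 : dist u (π v) ≤ dist u v + dist v (π v) := dist_triangle _ _ _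
    have t3 : dist u v ≤ dist u (π u) + dist (π u) v := dist_triangle _ _ _
    have t4 : dist (π u) v ≤ dist (π u) (π v) + dist (π v) v := dist_triangle _ _ _
    have e1 : dist (π u) u = dist u (π u) := dist_comm _ _
    have e2 : dist (π v) v = dist v (π v) := dist_comm _ _
    have b1 : dist u (π u) ≤ ε := hεu u hu
    have b2 : dist v (π v) ≤ ε := hεu v hv
    have h1 : dist (π u) (π v) ≤ dist u v + 2 * ε := by linarith
    have h2 : dist u v ≤ dist (π u) (π v) + 2 * ε := by linarith
    by_cases hd : dist u v ≤ r
    · have hd' : ¬ dist (π u) (π v) ≤ r := fun h => hcon (iff_of_true hd h)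
      push_neg at hd'
      constructor
      · exact le_trans (min_le_left _ _) hd
      · rcases min_cases (dist u v) (dist (π u) (π v)) with ⟨hm, _⟩ | ⟨hm, _⟩ <;>
          rw [hm] <;> linarith
    · have hd' : dist (π u) (π v) ≤ r := by
        by_contra h
        exact hcon (iff_of_false hd h)
      push_neg at hd
      constructor
      · exact le_trans (min_le_right _ _) hd'
      · rcases min_cases (dist u v) (dist (π u) (π v)) with ⟨hm, _⟩ | ⟨hm, _⟩ <;>
          rw [hm] <;> linarith
  -- measurability and integrability
  have hmA : Measurable A := measurable_w_nbhd w S _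
  have hmC : Measurable C := measurable_w_nbhd w T _
  have hboundA : ∀ r : ℝ, ‖ν r * A r‖ ≤ νbar := by
    intro r
    rw [Real.norm_eq_abs, abs_mul, abs_of_nonneg (hνnonneg r),
      abs_of_nonneg (hw01 _ (nbhdGraph S r) ⟨x, hx⟩).1]
    calc ν r * A r ≤ νbar * 1 :=
          mul_le_mul (hνle r) (hw01 _ (nbhdGraph S r) ⟨x, hx⟩).2
            (hw01 _ (nbhdGraph S r) ⟨x, hx⟩).1 hνbar.le
      _ = νbar := mul_one _
  have hboundC : ∀ r : ℝ, ‖ν r * C r‖ ≤ νbar := by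
    intro r
    rw [Real.norm_eq_abs, abs_mul, abs_of_nonneg (hνnonneg r),
      abs_of_nonneg (hw01 _ (nbhdGraph T r) ⟨π x, Finset.mem_image_of_mem π hx⟩).1]
    calc ν r * C r ≤ νbar * 1 :=
          mul_le_mul (hνle r)
            (hw01 _ (nbhdGraph T r) ⟨π x, Finset.mem_image_of_mem π hx⟩).2
            (hw01 _ (nbhdGraph T r) ⟨π x, Finset.mem_image_of_mem π hx⟩).1 hνbar.le
      _ = νbar := mul_one _
  have hiA : IntervalIntegrable (fun r => ν r * A r) volume 0 α := by
    rw [intervalIntegrable_iff_integrableOn_Ioc_of_le hα.le]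
    exact Measure.integrableOn_of_bounded measure_Ioc_lt_top.ne
      (hνmeas.mul hmA).aestronglyMeasurable (ae_of_all _ hboundA)
  have hiC : IntervalIntegrable (fun r => ν r * C r) volume 0 α := by
    rw [intervalIntegrable_iff_integrableOn_Ioc_of_le hα.le]
    exact Measure.integrableOn_of_bounded measure_Ioc_lt_top.ne
      (hνmeas.mul hmC).aestronglyMeasurable (ae_of_all _ hboundC)
  -- rewrite the difference of the integrals as a single integral
  have h1 : fWeight w ν α S ⟨x, hx⟩ = ∫ r in (0:ℝ)..α, ν r * A r := rfl
  have h2 : fWeight w ν α T ⟨π x, Finset.mem_image_of_mem π hx⟩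
      = ∫ r in (0:ℝ)..α, ν r * C r := rfl
  rw [h1, h2, ← intervalIntegral.integral_sub hiA hiC,
    intervalIntegral.integral_of_le hα.le]
  -- restrict the integral to the bad set
  have hg0 : ∀ r : ℝ, r ∉ B → ν r * A r - ν r * C r = 0 := by
    intro r hr
    rw [hgoodeq r (hnotB r hr)]
    ring
  have e1 : ∫ r in Set.Ioc (0:ℝ) α, (ν r * A r - ν r * C r)
      = ∫ r in Set.Ioc (0:ℝ) α ∩ B, (ν r * A r - ν r * C r) := by
    rw [← MeasureTheory.setIntegral_indicator hBmeas]
    refine MeasureTheory.setIntegral_congr_fun measurableSet_Ioc fun r _ => ?_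
    by_cases h : r ∈ B
    · rw [Set.indicator_of_mem h]
    · rw [Set.indicator_of_notMem h, hg0 r h]
  rw [e1]
  -- bound the integral over the bad set
  have hfin : volume (Set.Ioc (0:ℝ) α ∩ B) < ⊤ :=
    lt_of_le_of_lt (measure_mono Set.inter_subset_left) measure_Ioc_lt_top
  have hbound : ∀ r ∈ Set.Ioc (0:ℝ) α ∩ B, ‖ν r * A r - ν r * C r‖ ≤ νbar := by
    intro r _
    have hA := hw01 _ (nbhdGraph S r) (⟨x, hx⟩ : {x : M // x ∈ S})
    have hC := hw01 _ (nbhdGraph T r)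
      (⟨π x, Finset.mem_image_of_mem π hx⟩ : {x : M // x ∈ T})
    have hAC : |A r - C r| ≤ 1 := by
      rw [abs_sub_le_iff]
      simp only [hAdef, hCdef]
      constructor
      · linarith [hA.1, hA.2, hC.1, hC.2]
      · linarith [hA.1, hA.2, hC.1, hC.2]
    calc ‖ν r * A r - ν r * C r‖ = ν r * |A r - C r| := by
          rw [← mul_sub, Real.norm_eq_abs, abs_mul, abs_of_nonneg (hνnonneg r)]
      _ ≤ νbar * 1 := mul_le_mul (hνle r) hAC (abs_nonneg _) hνbar.le
      _ = νbar := mul_one _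
  have hstep : ‖∫ r in Set.Ioc (0:ℝ) α ∩ B, (ν r * A r - ν r * C r)‖
      ≤ νbar * (volume (Set.Ioc (0:ℝ) α ∩ B)).toReal :=
    norm_setIntegral_le_of_norm_le_const hfin hbound
  -- bound the measure of the bad set
  have hμB : volume B ≤ ((S.card : ENNReal)) ^ 2 * ENNReal.ofReal (2 * ε) := by
    calc volume B ≤ ∑ p ∈ (S ×ˢ S : Finset (M × M)),
          volume (Set.Icc (min (dist p.1 p.2) (dist (π p.1) (π p.2)))
            (min (dist p.1 p.2) (dist (π p.1) (π p.2)) + 2 * ε)) :=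
          measure_biUnion_finset_le _ _
      _ = ∑ _p ∈ (S ×ˢ S : Finset (M × M)), ENNReal.ofReal (2 * ε) := by
          refine Finset.sum_congr rfl fun p _ => ?_
          rw [Real.volume_Icc]
          congr 1
          ring
      _ = ((S ×ˢ S).card : ℕ) • ENNReal.ofReal (2 * ε) := Finset.sum_const _
      _ = ((S.card : ENNReal)) ^ 2 * ENNReal.ofReal (2 * ε) := by
          rw [Finset.card_product, nsmul_eq_mul]
          push_cast
          ring
  have hμBr : (volume (Set.Ioc (0:ℝ) α ∩ B)).toReal ≤ (S.card : ℝ) ^ 2 * (2 * ε) := by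
    have hle : volume (Set.Ioc (0:ℝ) α ∩ B)
        ≤ ((S.card : ENNReal)) ^ 2 * ENNReal.ofReal (2 * ε) :=
      le_trans (measure_mono Set.inter_subset_right) hμB
    have hne : ((S.card : ENNReal)) ^ 2 * ENNReal.ofReal (2 * ε) ≠ ⊤ := by
      exact ENNReal.mul_ne_top (by simp) ENNReal.ofReal_ne_top
    calc (volume (Set.Ioc (0:ℝ) α ∩ B)).toReal
        ≤ (((S.card : ENNReal)) ^ 2 * ENNReal.ofReal (2 * ε)).toReal :=
          ENNReal.toReal_mono hne hle
      _ = (S.card : ℝ) ^ 2 * (2 * ε) := by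
          rw [ENNReal.toReal_mul, ENNReal.toReal_pow,
            ENNReal.toReal_ofReal (by positivity : (0:ℝ) ≤ 2 * ε)]
          simp
  calc |∫ r in Set.Ioc (0:ℝ) α ∩ B, (ν r * A r - ν r * C r)|
      ≤ νbar * (volume (Set.Ioc (0:ℝ) α ∩ B)).toReal := hstep
    _ ≤ νbar * ((S.card : ℝ) ^ 2 * (2 * ε)) :=
        mul_le_mul_of_nonneg_left hμBr hνbar.le
    _ = 2 * νbar * (S.card : ℝ) ^ 2 * ε := by ring
end

section
/- The class-uniform graph weighting function w^CU satisfies locality: for every finite simple graph G = (V,E), vertices x,z ∈ V with N_G[x] = N_G[z], and every vertex y ∈ V∖N_G[x], it holds that w^CU(G∖{z})(y) = w^CU(G)(y), where G∖{z} is the induced subgraph of G on V∖{z}. -/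
open MeasureTheory

attribute [local instance] Classical.propDecidable

/-- The equivalence class of `x`: vertices with the same closed neighborhood. -/
def classOf {V : Type} (G : SimpleGraph V) (x : V) : Set V :=
  {y | cNbhd G y = cNbhd G x}

/-- The number of equivalence classes of vertices of `G` (for equality of
closed neighborhoods). -/
noncomputable def numClasses {V : Type} [Fintype V] (G : SimpleGraph V) : ℕ :=
  Set.ncard (Set.range (classOf G))

/-- The class-uniform graph weighting function `w^CU`. -/
noncomputable def wCU {V : Type} [Fintype V] (G : SimpleGraph V) (x : V) : ℝ :=
  1 / ((numClasses G : ℝ) * ((classOf G x).ncard : ℝ))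

lemma mem_cNbhd_comm {V : Type} (G : SimpleGraph V) (u v : V) :
    u ∈ cNbhd G v ↔ v ∈ cNbhd G u := by
  simp [cNbhd, Set.mem_insert_iff, SimpleGraph.mem_neighborSet, eq_comm, G.adj_comm]

lemma cNbhd_deleteVert {V : Type} (G : SimpleGraph V) (z : V) (v : {v : V // v ≠ z}) :
    cNbhd (deleteVert G z) v = Subtype.val ⁻¹' cNbhd G (v : V) := by
  ext u
  simp [cNbhd, deleteVert, Set.mem_insert_iff, SimpleGraph.mem_neighborSet,
    Subtype.ext_iff, SimpleGraph.comap_adj]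

lemma preimage_val_eq_iff {V : Type} (z : V) (S T : Set V) :
    (Subtype.val ⁻¹' S : Set {v : V // v ≠ z}) = Subtype.val ⁻¹' T ↔ S \ {z} = T \ {z} := by
  constructor
  · intro h
    ext u
    by_cases hu : u = z
    · simp [hu]
    · have := Set.ext_iff.mp h ⟨u, hu⟩
      simp only [Set.mem_preimage] at this
      simp [Set.mem_diff, hu, this]
  · intro h
    ext ⟨u, hu⟩
    have := Set.ext_iff.mp h u
    simp only [Set.mem_diff, Set.mem_singleton_iff, hu, not_false_iff, and_true] at this
    simpa using this

/-- `w^CU` satisfies locality: removing a vertex `z` that is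
equivalent to another vertex `x` (equal closed neighborhoods) does not change
the weight of any vertex `y` outside the closed neighborhood of `x`. -/
theorem wCU_local {V : Type} [Fintype V] (G : SimpleGraph V) (x z : V)
    (hxz : x ≠ z) (hequiv : cNbhd G x = cNbhd G z)
    (y : V) (hy : y ∉ cNbhd G x) (hyz : y ≠ z) :
    wCU (deleteVert G z) ⟨y, hyz⟩ = wCU G y := by
  classical
  set G' := deleteVert G z with hG'
  -- z-membership determined by x-membership
  have hzx : ∀ v : V, z ∈ cNbhd G v ↔ x ∈ cNbhd G v := by
    intro v
    rw [mem_cNbhd_comm G z v, mem_cNbhd_comm G x v, ← hequiv]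
  have key : ∀ S T : Set V, (z ∈ S ↔ x ∈ S) → (z ∈ T ↔ x ∈ T) →
      S \ {z} = T \ {z} → S = T := by
    intro S T hS hT h
    ext u
    by_cases hu : u = z
    · rw [hu, hS, hT]
      have hx1 : x ∈ S ↔ x ∈ S \ ({z} : Set V) := by simp [Set.mem_diff, hxz]
      have hx2 : x ∈ T ↔ x ∈ T \ ({z} : Set V) := by simp [Set.mem_diff, hxz]
      rw [hx1, hx2, h]
    · have := Set.ext_iff.mp h u
      simpa [Set.mem_diff, hu] using this
  have hC : ∀ a b : V, cNbhd G a \ {z} = cNbhd G b \ {z} → cNbhd G a = cNbhd G b :=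
    fun a b h => key _ _ (hzx a) (hzx b) h
  -- classes in G' are preimages of classes in G
  have hD : ∀ v : {v : V // v ≠ z}, classOf G' v = Subtype.val ⁻¹' classOf G (v : V) := by
    intro v
    ext u
    simp only [classOf, Set.mem_setOf_eq, Set.mem_preimage, hG', cNbhd_deleteVert,
      preimage_val_eq_iff]
    exact ⟨hC _ _, fun h => by rw [h]⟩
  have hzclass : ∀ a : V, z ∈ classOf G a ↔ x ∈ classOf G a := by
    intro a
    simp only [classOf, Set.mem_setOf_eq, ← hequiv]
  have hclassxz : classOf G z = classOf G x := by
    ext u; simp [classOf, hequiv]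
  -- z is not in the class of y
  have hzy : z ∉ classOf G y := by
    intro h
    have hx : x ∈ classOf G y := (hzclass y).mp h
    have : cNbhd G x = cNbhd G y := hx
    exact hy (by rw [this]; exact Set.mem_insert _ _)
  -- class of y keeps its cardinality
  have himg : Subtype.val '' (classOf G' ⟨y, hyz⟩) = classOf G y := by
    rw [hD, Set.image_preimage_eq_inter_range, Subtype.range_coe_subtype]
    ext u
    simp only [Set.mem_inter_iff, Set.mem_setOf_eq]
    constructor
    · exact fun h => h.1
    · intro h
      exact ⟨h, fun hu => hzy (hu ▸ h)⟩
  have hcard : (classOf G' ⟨y, hyz⟩).ncard = (classOf G y).ncard := by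
    rw [← himg, Set.ncard_image_of_injective _ Subtype.val_injective]
  -- number of classes is preserved
  have hrange : Set.range (classOf G') =
      (fun S => (Subtype.val ⁻¹' S : Set {v : V // v ≠ z})) '' (Set.range (classOf G)) := by
    ext S'
    constructor
    · rintro ⟨v, rfl⟩
      exact ⟨classOf G (v : V), ⟨(v : V), rfl⟩, (hD v).symm⟩
    · rintro ⟨S, ⟨v, rfl⟩, rfl⟩
      by_cases hv : v = z
      · subst hv
        exact ⟨⟨x, hxz⟩, by rw [hD]; simp [hclassxz]⟩
      · exact ⟨⟨v, hv⟩, hD ⟨v, hv⟩⟩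
  have hinj : Set.InjOn (fun S => (Subtype.val ⁻¹' S : Set {v : V // v ≠ z}))
      (Set.range (classOf G)) := by
    rintro S ⟨a, rfl⟩ T ⟨b, rfl⟩ h
    exact key _ _ (hzclass a) (hzclass b) ((preimage_val_eq_iff z _ _).mp h)
  have hnum : numClasses G' = numClasses G := by
    rw [numClasses, hrange, Set.ncard_image_of_injOn hinj, numClasses]
  rw [wCU, wCU, hnum, hcard]
end

section
/- Let S ⊆ ℝ^n be a finite set, let r > 0, and let x ∈ S. Then g_r(S)(x) − Σ_{y∈S, y≠x} χ_{g_r,S}(x,y) = (1/Vol(⋃_{u∈S} B_r(u))) · ∫_{B_r(x)∖⋃_{y∈S,y≠x} B_r(y)} 1/|S∩B_r(z)| dz, and in particular this quantity is nonnegative. -/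
open MeasureTheory Metric

attribute [local instance] Classical.propDecidable

/-- Euclidean space `ℝ^n`. -/
abbrev Euc (n : ℕ) := EuclideanSpace ℝ (Fin n)

/-- The Lebesgue volume of the union `⋃_{u ∈ S} B_r(u)` of the closed balls of
radius `r` centered at the points of `S`. -/
noncomputable def covVol {n : ℕ} (S : Finset (Euc n)) (r : ℝ) : ℝ :=
  (volume (⋃ u ∈ S, closedBall u r)).toReal

/-- The number of points of `S` in the closed ball `B_r(z)`, i.e. `|S ∩ B_r(z)|`. -/
noncomputable def nB {n : ℕ} (S : Finset (Euc n)) (r : ℝ) (z : Euc n) : ℕ :=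
  (S.filter fun u => u ∈ closedBall z r).card

/-- The weighting function `g_r`. -/
noncomputable def gr {n : ℕ} (S : Finset (Euc n)) (r : ℝ) (x : Euc n) : ℝ :=
  (1 / covVol S r) * ∫ z in closedBall x r, (1 : ℝ) / (nB S r z : ℝ)

/-- The sharing coefficient `χ_{g_r,S}(x,y)` for distinct `x, y ∈ S`. -/
noncomputable def chiGr {n : ℕ} (S : Finset (Euc n)) (r : ℝ) (x y : Euc n) : ℝ :=
  (1 / covVol S r) *
    ∫ z in closedBall x r ∩ closedBall y r,
      (1 : ℝ) / ((nB S r z : ℝ) * ((nB S r z : ℝ) - 1))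

/-- The private weight `χ_{g_r,S}(x,x)` of `x`. -/
noncomputable def chiPriv {n : ℕ} (S : Finset (Euc n)) (r : ℝ) (x : Euc n) : ℝ :=
  gr S r x - ∑ u ∈ S.erase x, chiGr S r x u

lemma measurable_nBr {n : ℕ} (S : Finset (Euc n)) (r : ℝ) :
    Measurable fun z => (nB S r z : ℝ) := by
  have : (fun z => (nB S r z : ℝ)) =
      fun z => ∑ u ∈ S, if z ∈ closedBall u r then (1:ℝ) else 0 := by
    funext z
    rw [nB, Finset.card_filter]
    push_cast
    exact Finset.sum_congr rfl fun u _ => by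
      simp [Metric.mem_closedBall_comm (x := u) (y := z)]
  rw [this]
  exact Finset.measurable_sum _ fun u _ =>
    Measurable.ite measurableSet_closedBall measurable_const measurable_const

lemma inv_nat_abs_le_one (m : ℕ) : ‖(1 : ℝ) / (m : ℝ)‖ ≤ 1 := by
  rcases Nat.eq_zero_or_pos m with h | h
  · simp [h]
  · rw [Real.norm_eq_abs, abs_of_nonneg (by positivity),
      div_le_one (by exact_mod_cast h)]
    exact_mod_cast h

lemma inv_nat_mul_abs_le_one (m : ℕ) :
    ‖(1 : ℝ) / ((m : ℝ) * ((m : ℝ) - 1))‖ ≤ 1 := by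
  match m with
  | 0 => norm_num
  | 1 => norm_num
  | (k + 2) =>
    have h1 : (1 : ℝ) ≤ ((k : ℝ) + 2) * (((k : ℝ) + 2) - 1) := by
      nlinarith [Nat.cast_nonneg (α := ℝ) k]
    have h0 : (0 : ℝ) < ((k : ℝ) + 2) * (((k : ℝ) + 2) - 1) := by linarith
    rw [Real.norm_eq_abs]
    push_cast
    rw [abs_of_nonneg (by positivity), div_le_one h0]
    exact h1

/-- decomposition of the weight of `x` into private and shared
parts; the private part is the integral over the region covered only by
`B_r(x)`, and it is nonnegative. -/
theorem gr_private_weight {n : ℕ} (S : Finset (Euc n)) (r : ℝ) (hr : 0 < r)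
    (x : Euc n) (hx : x ∈ S) :
    (gr S r x - ∑ y ∈ S.erase x, chiGr S r x y
        = (1 / covVol S r) *
            ∫ z in closedBall x r \ ⋃ y ∈ S.erase x, closedBall y r,
              (1 : ℝ) / (nB S r z : ℝ)) ∧
      0 ≤ gr S r x - ∑ y ∈ S.erase x, chiGr S r x y := by
  classical
  set f : Euc n → ℝ := fun z => 1 / (nB S r z : ℝ) with hf
  set h : Euc n → ℝ := fun z => 1 / ((nB S r z : ℝ) * ((nB S r z : ℝ) - 1)) with hhdef
  set U : Set (Euc n) := ⋃ y ∈ S.erase x, closedBall y r with hUdef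
  have hUm : MeasurableSet U :=
    MeasurableSet.biUnion (S.erase x).countable_toSet fun y _ => measurableSet_closedBall
  have hfm : Measurable f := (measurable_nBr S r).const_div 1
  have hhm : Measurable h := by
    apply Measurable.const_div
    exact ((measurable_nBr S r).mul ((measurable_nBr S r).sub measurable_const))
  have hballfin : volume (closedBall x (r : ℝ)) ≠ ⊤ := measure_closedBall_lt_top.ne
  have hfint : IntegrableOn f (closedBall x r) := by
    apply Measure.integrableOn_of_bounded hballfin hfm.aestronglyMeasurable (M := 1)
    exact Filter.Eventually.of_forall fun z => inv_nat_abs_le_one _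
  have hhint : IntegrableOn h (closedBall x r) := by
    apply Measure.integrableOn_of_bounded hballfin hhm.aestronglyMeasurable (M := 1)
    exact Filter.Eventually.of_forall fun z => inv_nat_mul_abs_le_one _
  -- key pointwise identity on closedBall x r
  have key : ∀ z ∈ closedBall x r,
      ∑ y ∈ S.erase x, (closedBall y r).indicator h z = U.indicator f z := by
    intro z hz
    have hxz : x ∈ closedBall z r := Metric.mem_closedBall_comm.mp hz
    have hxfil : x ∈ S.filter fun u => u ∈ closedBall z r :=
      Finset.mem_filter.mpr ⟨hx, hxz⟩
    have hm1 : 1 ≤ nB S r z := Finset.card_pos.mpr ⟨x, hxfil⟩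
    -- compute the sum as (card of covering balls) * h z
    have hfiltcongr : ((S.erase x).filter fun y => z ∈ closedBall y r)
        = ((S.filter fun u => u ∈ closedBall z r).erase x) := by
      rw [← Finset.filter_erase]
      exact Finset.filter_congr fun y _ => by
        simp [Metric.mem_closedBall_comm (x := z) (y := y)]
    have hcard : ((S.erase x).filter fun y => z ∈ closedBall y r).card
        = nB S r z - 1 := by
      rw [hfiltcongr, Finset.card_erase_of_mem hxfil, nB]
    have hsum : ∑ y ∈ S.erase x, (closedBall y r).indicator h z
        = ((nB S r z - 1 : ℕ) : ℝ) * h z := by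
      have : ∀ y, (closedBall y r).indicator h z
          = if z ∈ closedBall y r then h z else 0 := fun y => by
        by_cases hy : z ∈ closedBall y r <;> simp [Set.indicator, hy]
      simp_rw [this]
      rw [← Finset.sum_filter, Finset.sum_const, hcard, nsmul_eq_mul]
    rw [hsum]
    by_cases hzU : z ∈ U
    · -- some y ≠ x covers z, hence nB ≥ 2
      obtain ⟨y, hy, hzy⟩ : ∃ y ∈ S.erase x, z ∈ closedBall y r := by
        simpa [hUdef] using hzU
      have hyfil : y ∈ (S.erase x).filter fun y => z ∈ closedBall y r :=
        Finset.mem_filter.mpr ⟨hy, hzy⟩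
      have hcpos : 0 < nB S r z - 1 := by
        have := Finset.card_pos.mpr ⟨y, hyfil⟩
        omega
      have hm2 : 2 ≤ nB S r z := by omega
      rw [Set.indicator_of_mem hzU, hf, hhdef]
      have hm0 : (nB S r z : ℝ) ≠ 0 := by positivity
      have hm1' : (nB S r z : ℝ) - 1 ≠ 0 := by
        have : (2 : ℝ) ≤ (nB S r z : ℝ) := by exact_mod_cast hm2
        linarith
      have hcast : ((nB S r z - 1 : ℕ) : ℝ) = (nB S r z : ℝ) - 1 := by
        have := hm1; push_cast [Nat.cast_sub hm1]; ring
      rw [hcast]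
      field_simp
    · -- no other ball covers z
      have hempty : ((S.erase x).filter fun y => z ∈ closedBall y r) = ∅ := by
        rw [Finset.filter_eq_empty_iff]
        intro y hy hzy
        exact hzU (Set.mem_biUnion hy hzy)
      have : nB S r z - 1 = 0 := by rw [← hcard, hempty]; simp
      rw [Set.indicator_of_notMem hzU, this]
      simp
  -- the sum of sharing coefficients
  have hsumchi : ∑ y ∈ S.erase x, chiGr S r x y
      = (1 / covVol S r) * ∫ z in closedBall x r ∩ U, f z := by
    unfold chiGr
    rw [← Finset.mul_sum]
    congr 1
    have step1 : ∀ y ∈ S.erase x,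
        (∫ z in closedBall x r ∩ closedBall y r, h z)
          = ∫ z in closedBall x r, (closedBall y r).indicator h z := by
      intro y _
      rw [setIntegral_indicator measurableSet_closedBall]
    rw [Finset.sum_congr rfl step1, ← integral_finset_sum _
      (fun y _ => hhint.indicator measurableSet_closedBall)]
    rw [setIntegral_congr_fun measurableSet_closedBall key]
    rw [setIntegral_indicator hUm]
  have hdiff : (∫ z in closedBall x r \ U, f z)
      = (∫ z in closedBall x r, f z) - ∫ z in closedBall x r ∩ U, f z := by
    have := integral_inter_add_diff₀ (s := closedBall x r) (t := U)
      hUm.nullMeasurableSet hfint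
    linarith
  have heq : gr S r x - ∑ y ∈ S.erase x, chiGr S r x y
      = (1 / covVol S r) * ∫ z in closedBall x r \ U, f z := by
    rw [hsumchi, gr, hdiff]; ring
  refine ⟨heq, ?_⟩
  rw [heq]
  apply mul_nonneg
  · have : 0 ≤ covVol S r := ENNReal.toReal_nonneg
    positivity
  · apply setIntegral_nonneg (measurableSet_closedBall.diff hUm)
    intro z _
    positivity
end

section
/- Let S ⊆ ℝ^n be a finite set with |S| ≥ 2, let r > 0, and let x,y ∈ S be distinct. Then g_r(S∖{x})(y) = (g_r(S)(y) + χ_{g_r,S}(x,y)) · (1 + η), where η = χ_{g_r,S}(x,x)/(1 − χ_{g_r,S}(x,x)) ≥ 0 and χ_{g_r,S}(x,x) = g_r(S)(x) − Σ_{u∈S, u≠x} χ_{g_r,S}(x,u) is the private weight of x (the denominator 1 − χ_{g_r,S}(x,x) being strictly positive). In particular, g_r(S∖{x})(y) ≥ g_r(S)(y). -/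
open MeasureTheory Metric

attribute [local instance] Classical.propDecidable

section Helpers
variable {n : ℕ}

lemma nB_eq_sum (S : Finset (Euc n)) (r : ℝ) (z : Euc n) :
    nB S r z = ∑ u ∈ S, if z ∈ closedBall u r then 1 else 0 := by
  rw [nB, Finset.card_filter]
  apply Finset.sum_congr rfl
  intro u _
  simp [Metric.mem_closedBall, dist_comm]

lemma measurable_nB (S : Finset (Euc n)) (r : ℝ) : Measurable (nB S r) := by
  have : nB S r = fun z => ∑ u ∈ S, if z ∈ closedBall u r then 1 else 0 := by
    funext z; exact nB_eq_sum S r z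
  rw [this]
  exact Finset.measurable_sum _ fun u _ =>
    Measurable.ite measurableSet_closedBall measurable_const measurable_const

lemma measurable_nB' (S : Finset (Euc n)) (r : ℝ) : Measurable fun z => (nB S r z : ℝ) :=
  measurable_from_top.comp (measurable_nB S r)

lemma nB_erase_mem {S : Finset (Euc n)} {r : ℝ} {x z : Euc n} (hx : x ∈ S)
    (hzx : z ∈ closedBall x r) : nB (S.erase x) r z + 1 = nB S r z := by
  have hx' : x ∈ S.filter fun u => u ∈ closedBall z r := by
    simp [Finset.mem_filter, hx, Metric.mem_closedBall] at *
    simpa [dist_comm] using hzx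
  rw [nB, nB, Finset.filter_erase, Finset.card_erase_add_one hx']

lemma nB_erase_not_mem {S : Finset (Euc n)} {r : ℝ} {x z : Euc n}
    (hzx : z ∉ closedBall x r) : nB (S.erase x) r z = nB S r z := by
  rw [nB, nB, Finset.filter_erase, Finset.erase_eq_of_notMem]
  intro hx'
  simp only [Finset.mem_filter, Metric.mem_closedBall] at hx'
  exact hzx (by simpa [Metric.mem_closedBall, dist_comm] using hx'.2)

lemma two_le_nB {S : Finset (Euc n)} {r : ℝ} {x y z : Euc n} (hx : x ∈ S) (hy : y ∈ S)
    (hxy : x ≠ y) (hzx : z ∈ closedBall x r) (hzy : z ∈ closedBall y r) :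
    2 ≤ nB S r z := by
  have : ({x, y} : Finset (Euc n)) ⊆ S.filter fun u => u ∈ closedBall z r := by
    intro u hu
    simp only [Finset.mem_insert, Finset.mem_singleton] at hu
    rcases hu with rfl | rfl <;>
      simp [Finset.mem_filter, hx, hy, Metric.mem_closedBall, dist_comm] <;>
      [exact hzx; exact hzy]
  calc 2 = ({x, y} : Finset (Euc n)).card := by rw [Finset.card_insert_of_notMem (by simpa), Finset.card_singleton]
  _ ≤ _ := Finset.card_le_card this

lemma aux1 (k : ℕ) : |1/(k:ℝ)| ≤ 1 := by
  rcases k with _ | k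
  · norm_num
  · rw [abs_of_nonneg (by positivity)]
    rw [div_le_one (by positivity)]
    exact_mod_cast Nat.one_le_iff_ne_zero.2 (Nat.succ_ne_zero k)

lemma aux2 (k : ℕ) : |1/((k:ℝ)*((k:ℝ)-1))| ≤ 1 := by
  rcases k with _ | _ | k
  · norm_num
  · norm_num
  · push_cast
    rw [show ((k:ℝ)+1+1-1) = (k:ℝ)+1 by ring]
    rw [abs_of_nonneg (by positivity), div_le_one (by positivity)]
    nlinarith [Nat.cast_nonneg (α := ℝ) k]

lemma aux3 (k : ℕ) : |((k:ℝ)-1) * (1/((k:ℝ)*((k:ℝ)-1)))| ≤ 1 := by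
  rcases k with _ | _ | k
  · norm_num
  · norm_num
  · push_cast
    rw [show ((k:ℝ)+1+1-1) = (k:ℝ)+1 by ring]
    rw [mul_one_div, abs_of_nonneg (by positivity), div_le_one (by positivity)]
    nlinarith [Nat.cast_nonneg (α := ℝ) k]

lemma integrableOn_bdd {f : Euc n → ℝ} (hf : Measurable f) {C : ℝ} (hC : ∀ z, |f z| ≤ C)
    {s : Set (Euc n)} (hs : MeasurableSet s) (hμ : volume s ≠ ⊤) : IntegrableOn f s := by
  apply Integrable.mono' (show IntegrableOn (fun _ => C) s volume from integrableOn_const hμ) hf.aestronglyMeasurable.restrict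
  filter_upwards with z using hC z

lemma aux4 {k' k : ℕ} (hkk : k' ≤ k) : |(k':ℝ) * (1/((k:ℝ)*((k:ℝ)-1)))| ≤ 1 := by
  rcases k with _ | _ | k
  · interval_cases k' <;> norm_num
  · interval_cases k' <;> norm_num
  · push_cast
    rw [show ((k:ℝ)+1+1-1) = (k:ℝ)+1 by ring]
    rw [mul_one_div, abs_of_nonneg (by positivity), div_le_one (by positivity)]
    have : (k':ℝ) ≤ (k:ℝ)+1+1 := by exact_mod_cast hkk
    nlinarith [Nat.cast_nonneg (α := ℝ) k, Nat.cast_nonneg (α := ℝ) k']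

lemma aux_h_nonneg (k : ℕ) : 0 ≤ 1/((k:ℝ)*((k:ℝ)-1)) := by
  rcases k with _ | _ | k
  · norm_num
  · norm_num
  · push_cast
    rw [show ((k:ℝ)+1+1-1) = (k:ℝ)+1 by ring]
    positivity

lemma nB_mono {S : Finset (Euc n)} {r : ℝ} (x z : Euc n) :
    nB (S.erase x) r z ≤ nB S r z :=
  Finset.card_le_card (Finset.filter_subset_filter _ (Finset.erase_subset _ _))

lemma volU_ne_top (S : Finset (Euc n)) (r : ℝ) :
    volume (⋃ u ∈ S, closedBall u r) ≠ ⊤ := by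
  apply ne_of_lt
  calc volume (⋃ u ∈ S, closedBall u r) ≤ ∑ u ∈ S, volume (closedBall u r) :=
        measure_biUnion_finset_le S _
  _ < ⊤ := ENNReal.sum_lt_top.2 fun u _ => measure_closedBall_lt_top

lemma Um_meas (S : Finset (Euc n)) (r : ℝ) :
    MeasurableSet (⋃ u ∈ S, closedBall u r) :=
  S.measurableSet_biUnion fun u _ => measurableSet_closedBall

lemma nB_cast_sum (S : Finset (Euc n)) (r : ℝ) (z : Euc n) :
    (nB S r z : ℝ) = ∑ u ∈ S, if z ∈ closedBall u r then (1:ℝ) else 0 := by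
  rw [nB_eq_sum]
  push_cast
  rfl

lemma mem_U_iff (S : Finset (Euc n)) (r : ℝ) (z : Euc n) :
    z ∈ ⋃ u ∈ S, closedBall u r ↔ 0 < nB S r z := by
  simp [nB, Finset.card_pos, Finset.filter_nonempty_iff, Set.mem_iUnion,
    Metric.mem_closedBall, dist_comm]

end Helpers

/-- effect of removing the element `x` on the weight of `y`:
a local additive increase by the sharing coefficient, followed by a global
multiplicative rescaling by `1 + η` where `η = χ(x,x)/(1 − χ(x,x)) ≥ 0`.
In particular all remaining weights weakly increase. -/
theorem gr_removal_effect {n : ℕ} (S : Finset (Euc n)) (h2 : 2 ≤ S.card)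
    (r : ℝ) (hr : 0 < r) (x y : Euc n) (hx : x ∈ S) (hy : y ∈ S) (hxy : x ≠ y) :
    0 < 1 - chiPriv S r x ∧
    0 ≤ chiPriv S r x / (1 - chiPriv S r x) ∧
    gr (S.erase x) r y
      = (gr S r y + chiGr S r x y) * (1 + chiPriv S r x / (1 - chiPriv S r x)) ∧
    gr S r y ≤ gr (S.erase x) r y := by
  classical
  set S' := S.erase x with hS'def
  have hyS' : y ∈ S' := Finset.mem_erase.2 ⟨fun h => hxy h.symm, hy⟩
  set U : Set (Euc n) := ⋃ u ∈ S, closedBall u r with hUdef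
  set U' : Set (Euc n) := ⋃ u ∈ S', closedBall u r with hU'def
  have hU'm : MeasurableSet U' := Um_meas S' r
  have hUfin : volume U ≠ ⊤ := volU_ne_top S r
  have hU'fin : volume U' ≠ ⊤ := volU_ne_top S' r
  have hUsplit : U = closedBall x r ∪ U' := by
    conv_lhs => rw [hUdef, ← Finset.insert_erase hx]
    rw [Finset.set_biUnion_insert]
  -- measurability
  have hmf : Measurable fun z => (1:ℝ) / (nB S r z : ℝ) :=
    measurable_const.div (measurable_nB' S r)
  have hmf' : Measurable fun z => (1:ℝ) / (nB S' r z : ℝ) :=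
    measurable_const.div (measurable_nB' S' r)
  have hmh : Measurable fun z => (1:ℝ) / ((nB S r z : ℝ) * ((nB S r z : ℝ) - 1)) :=
    measurable_const.div ((measurable_nB' S r).mul ((measurable_nB' S r).sub measurable_const))
  have hmg : Measurable fun z =>
      (nB S' r z : ℝ) * ((1:ℝ) / ((nB S r z : ℝ) * ((nB S r z : ℝ) - 1))) :=
    (measurable_nB' S' r).mul hmh
  -- integrability
  have hballfin : ∀ w : Euc n, volume (closedBall w r) ≠ ⊤ := fun w =>
    measure_closedBall_lt_top.ne
  have int_f_y : IntegrableOn (fun z => (1:ℝ) / (nB S r z : ℝ)) (closedBall y r) :=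
    integrableOn_bdd hmf (fun z => aux1 _) measurableSet_closedBall (hballfin y)
  have int_f_x : IntegrableOn (fun z => (1:ℝ) / (nB S r z : ℝ)) (closedBall x r) :=
    integrableOn_bdd hmf (fun z => aux1 _) measurableSet_closedBall (hballfin x)
  have int_g_x : IntegrableOn (fun z =>
      (nB S' r z : ℝ) * ((1:ℝ) / ((nB S r z : ℝ) * ((nB S r z : ℝ) - 1)))) (closedBall x r) :=
    integrableOn_bdd hmg (fun z => aux4 (nB_mono x z)) measurableSet_closedBall (hballfin x)
  have int_hind : IntegrableOn
      (fun z => (closedBall x r).indicator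
        (fun z => (1:ℝ) / ((nB S r z : ℝ) * ((nB S r z : ℝ) - 1))) z) (closedBall y r) := by
    apply integrableOn_bdd (hmh.indicator measurableSet_closedBall) (C := 1) ?_
      measurableSet_closedBall (hballfin y)
    intro z
    by_cases hz : z ∈ closedBall x r
    · rw [Set.indicator_of_mem hz]; exact aux2 _
    · rw [Set.indicator_of_notMem hz]; norm_num
  have int_hind' : ∀ u, IntegrableOn
      (fun z => (closedBall u r).indicator
        (fun z => (1:ℝ) / ((nB S r z : ℝ) * ((nB S r z : ℝ) - 1))) z) (closedBall x r) := by
    intro u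
    apply integrableOn_bdd (hmh.indicator measurableSet_closedBall) (C := 1) ?_
      measurableSet_closedBall (hballfin x)
    intro z
    by_cases hz : z ∈ closedBall u r
    · rw [Set.indicator_of_mem hz]; exact aux2 _
    · rw [Set.indicator_of_notMem hz]; norm_num
  -- Step A
  have stepA : (∫ z in closedBall y r, (1:ℝ) / (nB S' r z : ℝ))
      = (∫ z in closedBall y r, (1:ℝ) / (nB S r z : ℝ))
        + ∫ z in closedBall x r ∩ closedBall y r,
            (1:ℝ) / ((nB S r z : ℝ) * ((nB S r z : ℝ) - 1)) := by
    have hpt : Set.EqOn (fun z => (1:ℝ) / (nB S' r z : ℝ))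
        (fun z => (1:ℝ) / (nB S r z : ℝ) + (closedBall x r).indicator
          (fun z => (1:ℝ) / ((nB S r z : ℝ) * ((nB S r z : ℝ) - 1))) z)
        (closedBall y r) := by
      intro z hz
      by_cases hzx : z ∈ closedBall x r
      · have h2z := two_le_nB hx hy hxy hzx hz
        have hek := nB_erase_mem hx hzx
        have hc : (nB S' r z : ℝ) = (nB S r z : ℝ) - 1 := by
          have := congrArg (Nat.cast : ℕ → ℝ) hek
          push_cast at this; linarith
        have hk2 : (2:ℝ) ≤ (nB S r z : ℝ) := by exact_mod_cast h2z
        have h0 : (nB S r z : ℝ) ≠ 0 := by linarith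
        have h1 : (nB S r z : ℝ) - 1 ≠ 0 := by linarith
        simp only [Set.indicator_of_mem hzx]
        rw [hc]
        field_simp
        ring
      · simp only [Set.indicator_of_notMem hzx, add_zero]
        rw [nB_erase_not_mem hzx]
    rw [setIntegral_congr_fun measurableSet_closedBall hpt,
        integral_add int_f_y int_hind,
        setIntegral_indicator measurableSet_closedBall,
        Set.inter_comm (closedBall y r)]
  -- sum of sharing integrals
  have hsum : (∑ u ∈ S', ∫ z in closedBall x r ∩ closedBall u r,
        (1:ℝ) / ((nB S r z : ℝ) * ((nB S r z : ℝ) - 1)))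
      = ∫ z in closedBall x r,
          (nB S' r z : ℝ) * ((1:ℝ) / ((nB S r z : ℝ) * ((nB S r z : ℝ) - 1))) := by
    have step1 : ∀ u ∈ S', (∫ z in closedBall x r ∩ closedBall u r,
        (1:ℝ) / ((nB S r z : ℝ) * ((nB S r z : ℝ) - 1)))
        = ∫ z in closedBall x r, (closedBall u r).indicator
            (fun z => (1:ℝ) / ((nB S r z : ℝ) * ((nB S r z : ℝ) - 1))) z :=
      fun u _ => (setIntegral_indicator measurableSet_closedBall).symm
    rw [Finset.sum_congr rfl step1,
        ← integral_finset_sum _ (fun u _ => int_hind' u)]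
    refine setIntegral_congr_fun measurableSet_closedBall fun z _ => ?_
    rw [nB_cast_sum S' r z, Finset.sum_mul]
    apply Finset.sum_congr rfl
    intro u _
    by_cases hzu : z ∈ closedBall u r
    · rw [Set.indicator_of_mem hzu, if_pos hzu, one_mul]
    · rw [Set.indicator_of_notMem hzu, if_neg hzu, zero_mul]
  -- Step B
  have stepB : (∫ z in closedBall x r, ((1:ℝ) / (nB S r z : ℝ)
        - (nB S' r z : ℝ) * ((1:ℝ) / ((nB S r z : ℝ) * ((nB S r z : ℝ) - 1)))))
      = (volume (closedBall x r \ U')).toReal := by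
    have hpt : Set.EqOn (fun z => (1:ℝ) / (nB S r z : ℝ)
        - (nB S' r z : ℝ) * ((1:ℝ) / ((nB S r z : ℝ) * ((nB S r z : ℝ) - 1))))
        (U'ᶜ.indicator fun _ => (1:ℝ)) (closedBall x r) := by
      intro z hz
      have hek := nB_erase_mem hx hz
      rw [← hS'def] at hek
      by_cases hzU : z ∈ U'
      · have h1 : 0 < nB S' r z := (mem_U_iff S' r z).1 hzU
        have h2 : 2 ≤ nB S r z := by omega
        have hc : (nB S' r z : ℝ) = (nB S r z : ℝ) - 1 := by
          have := congrArg (Nat.cast : ℕ → ℝ) hek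
          push_cast at this; linarith
        have hk2 : (2:ℝ) ≤ (nB S r z : ℝ) := by exact_mod_cast h2
        have h0 : (nB S r z : ℝ) ≠ 0 := by linarith
        have h1' : (nB S r z : ℝ) - 1 ≠ 0 := by linarith
        rw [Set.indicator_of_notMem (Set.notMem_compl_iff.2 hzU)]
        simp only
        rw [hc]
        field_simp
        ring
      · have h1 : nB S' r z = 0 := by
          by_contra hne
          exact hzU ((mem_U_iff S' r z).2 (Nat.pos_of_ne_zero hne))
        have h2 : nB S r z = 1 := by omega
        rw [Set.indicator_of_mem (Set.mem_compl hzU)]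
        simp [h1, h2]
    rw [setIntegral_congr_fun measurableSet_closedBall hpt,
        setIntegral_indicator hU'm.compl, ← Set.diff_eq, setIntegral_const]
    simp
    rfl
  -- measure split
  have hWfin : volume (closedBall x r \ U') ≠ ⊤ :=
    ((measure_mono Set.diff_subset).trans_lt measure_closedBall_lt_top).ne
  have hmeasEq : volume U = volume U' + volume (closedBall x r \ U') := by
    have hU2 : U = U' ∪ (closedBall x r \ U') := by
      rw [Set.union_diff_self, Set.union_comm]; exact hUsplit
    rw [hU2, measure_union Set.disjoint_sdiff_right (measurableSet_closedBall.diff hU'm)]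
  have hVsum : (volume U).toReal
      = (volume U').toReal + (volume (closedBall x r \ U')).toReal := by
    rw [hmeasEq, ENNReal.toReal_add hU'fin hWfin]
  have hV'pos : 0 < (volume U').toReal := by
    refine ENNReal.toReal_pos ?_ hU'fin
    have hle : volume (closedBall y r) ≤ volume U' := by
      apply measure_mono
      intro z hz
      simp only [hU'def, Set.mem_iUnion]
      exact ⟨y, hyS', hz⟩
    exact ((measure_closedBall_pos volume y hr).trans_le hle).ne'
  have hVpos : 0 < (volume U).toReal := by
    refine ENNReal.toReal_pos ?_ hUfin
    have hle : volume (closedBall y r) ≤ volume U := by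
      apply measure_mono
      intro z hz
      simp only [hUdef, Set.mem_iUnion]
      exact ⟨y, hy, hz⟩
    exact ((measure_closedBall_pos volume y hr).trans_le hle).ne'
  have hWnn : 0 ≤ (volume (closedBall x r \ U')).toReal := ENNReal.toReal_nonneg
  -- abbreviations
  have hgr' : gr S' r y
      = (1/(volume U').toReal) * ∫ z in closedBall y r, (1:ℝ) / (nB S' r z : ℝ) := rfl
  have hgr : gr S r y
      = (1/(volume U).toReal) * ∫ z in closedBall y r, (1:ℝ) / (nB S r z : ℝ) := rfl
  have hchi : chiGr S r x y
      = (1/(volume U).toReal) * ∫ z in closedBall x r ∩ closedBall y r,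
          (1:ℝ) / ((nB S r z : ℝ) * ((nB S r z : ℝ) - 1)) := rfl
  have hpriv : chiPriv S r x
      = (volume (closedBall x r \ U')).toReal / (volume U).toReal := by
    have hsum2 : (∑ u ∈ S', chiGr S r x u)
        = (1/(volume U).toReal) * ∑ u ∈ S', ∫ z in closedBall x r ∩ closedBall u r,
            (1:ℝ) / ((nB S r z : ℝ) * ((nB S r z : ℝ) - 1)) := by
      rw [Finset.mul_sum]
      exact Finset.sum_congr rfl fun u _ => rfl
    rw [chiPriv, ← hS'def, hsum2, hsum]
    show (1/(volume U).toReal) * (∫ z in closedBall x r, (1:ℝ) / (nB S r z : ℝ))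
        - (1/(volume U).toReal) * _ = _
    rw [← mul_sub, ← integral_sub int_f_x int_g_x, stepB]
    ring
  set V : ℝ := (volume U).toReal
  set V' : ℝ := (volume U').toReal
  set W : ℝ := (volume (closedBall x r \ U')).toReal
  have hVne : V ≠ 0 := hVpos.ne'
  have hV'ne : V' ≠ 0 := hV'pos.ne'
  have hfrac : 1 - chiPriv S r x = V' / V := by
    rw [hpriv]; field_simp; linarith
  have heta : chiPriv S r x / (1 - chiPriv S r x) = W / V' := by
    rw [hfrac, hpriv]; field_simp
  have h1 : 0 < 1 - chiPriv S r x := by rw [hfrac]; positivity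
  have hetann : 0 ≤ chiPriv S r x / (1 - chiPriv S r x) := by
    rw [heta]; positivity
  have hgrnn : 0 ≤ gr S r y := by
    rw [hgr]
    apply mul_nonneg (by positivity)
    apply setIntegral_nonneg measurableSet_closedBall
    intro z _; positivity
  have hchinn : 0 ≤ chiGr S r x y := by
    rw [hchi]
    apply mul_nonneg (by positivity)
    apply setIntegral_nonneg (measurableSet_closedBall.inter measurableSet_closedBall)
    intro z _; exact aux_h_nonneg _
  have hEq : gr S' r y
      = (gr S r y + chiGr S r x y) * (1 + chiPriv S r x / (1 - chiPriv S r x)) := by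
    rw [hgr', stepA, hgr, hchi, heta]
    have h1pe : 1 + W / V' = V / V' := by field_simp; linarith
    rw [h1pe]
    field_simp
  refine ⟨h1, hetann, hEq, ?_⟩
  nlinarith [hEq, hgrnn, hchinn, hetann]
end

section
/- Let S ⊆ ℝ^n be a finite set, let α > 0, let ν be a probability density on ℝ supported in [0,α] with ν(r) > 0 for almost every r ∈ [0,α], and let x,y ∈ S be distinct. Then χ_{f_ν,S}(x,y) = ∫_0^α ν(r)·χ_{g_r,S}(x,y) dr is nonnegative, and χ_{f_ν,S}(x,y) = 0 if and only if d₂(x,y) ≥ 2α. -/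
open MeasureTheory Metric

attribute [local instance] Classical.propDecidable

lemma qk_nonneg (k : ℕ) : 0 ≤ (1:ℝ) / ((k:ℝ) * ((k:ℝ) - 1)) := by
  apply div_nonneg zero_le_one
  rcases Nat.eq_zero_or_pos k with h | h
  · simp [h]
  · have : (1:ℝ) ≤ (k:ℝ) := by exact_mod_cast h
    nlinarith
lemma qk_le_one (k : ℕ) : (1:ℝ) / ((k:ℝ) * ((k:ℝ) - 1)) ≤ 1 := by
  rcases le_or_gt k 1 with h | h
  · interval_cases k <;> norm_num
  · have h2 : (2:ℝ) ≤ (k:ℝ) := by exact_mod_cast h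
    rw [div_le_one (by nlinarith)]
    nlinarith
lemma qk_lower (k N : ℕ) (h2 : 2 ≤ k) (hN : k ≤ N) :
    (1:ℝ) / ((N:ℝ) * ((N:ℝ) - 1)) ≤ (1:ℝ) / ((k:ℝ) * ((k:ℝ) - 1)) := by
  have h2' : (2:ℝ) ≤ (k:ℝ) := by exact_mod_cast h2
  have hN' : (k:ℝ) ≤ (N:ℝ) := by exact_mod_cast hN
  apply one_div_le_one_div_of_le (by nlinarith)
  nlinarith

-- cast of nB as a sum
lemma nB_cast {n : ℕ} (S : Finset (Euc n)) (r : ℝ) (z : Euc n) :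
    (nB S r z : ℝ) = ∑ u ∈ S, if dist u z ≤ r then (1:ℝ) else 0 := by
  unfold nB
  rw [Finset.card_filter]
  push_cast
  refine Finset.sum_congr rfl fun u _ => ?_
  simp [mem_closedBall]

lemma measurable_N {n : ℕ} (S : Finset (Euc n)) :
    Measurable (fun p : ℝ × Euc n => (nB S p.1 p.2 : ℝ)) := by
  have : (fun p : ℝ × Euc n => (nB S p.1 p.2 : ℝ))
      = fun p => ∑ u ∈ S, if dist u p.2 ≤ p.1 then (1:ℝ) else 0 := by
    funext p; exact nB_cast S p.1 p.2
  rw [this]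
  apply Finset.measurable_sum
  intro u _
  have hset : MeasurableSet {p : ℝ × Euc n | dist u p.2 ≤ p.1} :=
    measurableSet_le ((continuous_const.dist continuous_snd).measurable) measurable_fst
  exact Measurable.ite hset measurable_const measurable_const

lemma measurable_Q {n : ℕ} (S : Finset (Euc n)) :
    Measurable (fun p : ℝ × Euc n => (1:ℝ) / ((nB S p.1 p.2 : ℝ) * ((nB S p.1 p.2 : ℝ) - 1))) := by
  have h := measurable_N S
  exact measurable_const.div ((h.mul (h.sub measurable_const)))

lemma measurable_q {n : ℕ} (S : Finset (Euc n)) (r : ℝ) :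
    Measurable (fun z : Euc n => (1:ℝ) / ((nB S r z : ℝ) * ((nB S r z : ℝ) - 1))) := by
  have h : Measurable (fun z : Euc n => (nB S r z : ℝ)) := by
    have : (fun z : Euc n => (nB S r z : ℝ))
        = fun z => ∑ u ∈ S, if dist u z ≤ r then (1:ℝ) else 0 := by
      funext z; exact nB_cast S r z
    rw [this]
    apply Finset.measurable_sum
    intro u _
    have hset : MeasurableSet {z : Euc n | dist u z ≤ r} :=
      measurableSet_le (continuous_const.dist continuous_id).measurable measurable_const
    exact Measurable.ite hset measurable_const measurable_const
  exact measurable_const.div ((h.mul (h.sub measurable_const)))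

lemma measurable_covVol {n : ℕ} (S : Finset (Euc n)) : Measurable (covVol S) := by
  have hm : Monotone (fun r => volume (⋃ u ∈ S, closedBall u r)) := by
    intro a b hab
    exact measure_mono (Set.iUnion₂_mono fun u _ => closedBall_subset_closedBall hab)
  exact hm.measurable.ennreal_toReal

lemma measurable_chiGr {n : ℕ} (S : Finset (Euc n)) (x y : Euc n) :
    Measurable (fun r => chiGr S r x y) := by
  set A : Set (ℝ × Euc n) := {p | dist p.2 x ≤ p.1 ∧ dist p.2 y ≤ p.1} with hA
  have hAmeas : MeasurableSet A := by
    apply MeasurableSet.inter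
    · exact measurableSet_le ((continuous_snd.dist continuous_const).measurable) measurable_fst
    · exact measurableSet_le ((continuous_snd.dist continuous_const).measurable) measurable_fst
  set F : ℝ × Euc n → ℝ :=
    A.indicator (fun p => (1:ℝ) / ((nB S p.1 p.2 : ℝ) * ((nB S p.1 p.2 : ℝ) - 1))) with hF
  have hFmeas : Measurable F := (measurable_Q S).indicator hAmeas
  have hI : Measurable fun r => ∫ z, F (r, z) :=
    (hFmeas.stronglyMeasurable.integral_prod_right').measurable
  have heq : (fun r => chiGr S r x y) = fun r => (1 / covVol S r) * ∫ z, F (r, z) := by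
    funext r
    unfold chiGr
    congr 1
    rw [← integral_indicator ((measurableSet_closedBall).inter measurableSet_closedBall)]
    refine integral_congr_ae (Filter.Eventually.of_forall fun z => ?_)
    rw [hF]
    rcases Classical.em (z ∈ closedBall x r ∩ closedBall y r) with h | h
    · have h2 : (r, z) ∈ A := by simpa [hA, mem_closedBall] using h
      simp [Set.indicator_apply, h, h2]
    · have h2 : (r, z) ∉ A := by simpa [hA, mem_closedBall] using h
      simp [Set.indicator_apply, h, h2]
  rw [heq]
  exact ((measurable_const.div (measurable_covVol S))).mul hI

lemma covU_lt_top {n : ℕ} (S : Finset (Euc n)) (r : ℝ) :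
    volume (⋃ u ∈ S, closedBall u r) < ⊤ :=
  lt_of_le_of_lt (measure_biUnion_finset_le S _)
    (ENNReal.sum_lt_top.mpr fun u _ => measure_closedBall_lt_top)

lemma chiGr_nonneg {n : ℕ} (S : Finset (Euc n)) (r : ℝ) (x y : Euc n) :
    0 ≤ chiGr S r x y := by
  unfold chiGr
  apply mul_nonneg (div_nonneg zero_le_one ENNReal.toReal_nonneg)
  exact setIntegral_nonneg (measurableSet_closedBall.inter measurableSet_closedBall)
    fun z _ => qk_nonneg _

lemma chiGr_le_one {n : ℕ} (S : Finset (Euc n)) (r : ℝ) (x y : Euc n) (hx : x ∈ S) :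
    chiGr S r x y ≤ 1 := by
  set U := ⋃ u ∈ S, closedBall u r with hU
  set s := closedBall x r ∩ closedBall y r with hs
  have hsubU : s ⊆ U := by
    intro z hz
    exact Set.mem_biUnion hx hz.1
  have hsfin : volume s < ⊤ := lt_of_le_of_lt (measure_mono hsubU) (covU_lt_top S r)
  unfold chiGr
  rcases eq_or_lt_of_le (ENNReal.toReal_nonneg : (0:ℝ) ≤ covVol S r) with hV | hV
  · have hU0 : volume U = 0 := by
      have := covU_lt_top S r
      rcases (ENNReal.toReal_eq_zero_iff _).mp hV.symm with h | h
      · exact h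
      · exact absurd h (covU_lt_top S r).ne
    have hs0 : volume s = 0 := le_antisymm (hU0 ▸ measure_mono hsubU) (zero_le)
    rw [show (∫ z in s, (1:ℝ) / ((nB S r z : ℝ) * ((nB S r z : ℝ) - 1))) = 0 by
      rw [Measure.restrict_eq_zero.mpr hs0, integral_zero_measure]]
    simp
  · have hbound : ‖∫ z in s, (1:ℝ) / ((nB S r z : ℝ) * ((nB S r z : ℝ) - 1))‖
        ≤ 1 * (volume s).toReal := by
      apply norm_setIntegral_le_of_norm_le_const hsfin
      · intro z _
        rw [Real.norm_eq_abs, abs_of_nonneg (qk_nonneg _)]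
        exact qk_le_one _
    have h1 : (∫ z in s, (1:ℝ) / ((nB S r z : ℝ) * ((nB S r z : ℝ) - 1))) ≤ covVol S r := by
      calc _ ≤ ‖∫ z in s, (1:ℝ) / ((nB S r z : ℝ) * ((nB S r z : ℝ) - 1))‖ := le_abs_self _
        _ ≤ 1 * (volume s).toReal := hbound
        _ = (volume s).toReal := one_mul _
        _ ≤ covVol S r := ENNReal.toReal_mono (covU_lt_top S r).ne (measure_mono hsubU)
    rw [one_div, inv_mul_le_iff₀ (show (0:ℝ) < covVol S r from hV), mul_one]
    exact h1

lemma chiGr_pos {n : ℕ} (S : Finset (Euc n)) (r : ℝ) (x y : Euc n)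
    (hx : x ∈ S) (hy : y ∈ S) (hxy : x ≠ y) (hr : 0 < r) (hd : dist x y < 2 * r) :
    0 < chiGr S r x y := by
  set U := ⋃ u ∈ S, closedBall u r with hU
  set s := closedBall x r ∩ closedBall y r with hs
  have hsubU : s ⊆ U := by
    intro z hz
    exact Set.mem_biUnion hx hz.1
  have hsfin : volume s < ⊤ := lt_of_le_of_lt (measure_mono hsubU) (covU_lt_top S r)
  -- the midpoint ball is inside s
  have hmid : ball (midpoint ℝ x y) (r - dist x y / 2) ⊆ s := by
    intro z hz
    rw [mem_ball] at hz
    have hdx : dist x (midpoint ℝ x y) = dist x y / 2 := by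
      rw [dist_left_midpoint]; norm_num; ring
    have hdy : dist y (midpoint ℝ x y) = dist x y / 2 := by
      rw [dist_right_midpoint]; norm_num; ring
    constructor
    · rw [mem_closedBall]
      calc dist z x ≤ dist z (midpoint ℝ x y) + dist (midpoint ℝ x y) x := dist_triangle _ _ _
        _ = dist z (midpoint ℝ x y) + dist x y / 2 := by rw [dist_comm (midpoint ℝ x y) x, hdx]
        _ ≤ r := by linarith
    · rw [mem_closedBall]
      calc dist z y ≤ dist z (midpoint ℝ x y) + dist (midpoint ℝ x y) y := dist_triangle _ _ _
        _ = dist z (midpoint ℝ x y) + dist x y / 2 := by rw [dist_comm (midpoint ℝ x y) y, hdy]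
        _ ≤ r := by linarith
  have hspos : 0 < volume s :=
    lt_of_lt_of_le (measure_ball_pos volume _ (by linarith)) (measure_mono hmid)
  have hUpos : 0 < volume U := lt_of_lt_of_le hspos (measure_mono hsubU)
  have hVpos : 0 < covVol S r :=
    ENNReal.toReal_pos hUpos.ne' (covU_lt_top S r).ne
  -- lower bound for the integrand on s
  set c : ℝ := (1:ℝ) / ((S.card : ℝ) * ((S.card : ℝ) - 1)) with hc
  have hcard : 2 ≤ S.card := by
    rw [show (2:ℕ) = 1 + 1 by rfl]
    exact Finset.one_lt_card.mpr ⟨x, hx, y, hy, hxy⟩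
  have hcpos : 0 < c := by
    have h2 : (2:ℝ) ≤ (S.card : ℝ) := by exact_mod_cast hcard
    apply div_pos one_pos
    nlinarith
  have hlow : ∀ z ∈ s, c ≤ (1:ℝ) / ((nB S r z : ℝ) * ((nB S r z : ℝ) - 1)) := by
    intro z hz
    apply qk_lower
    · rw [show (2:ℕ) = 1 + 1 by rfl]
      apply Finset.one_lt_card.mpr
      refine ⟨x, ?_, y, ?_, hxy⟩
      · rw [Finset.mem_filter]
        exact ⟨hx, by rw [mem_closedBall, dist_comm]; exact hz.1⟩
      · rw [Finset.mem_filter]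
        exact ⟨hy, by rw [mem_closedBall, dist_comm]; exact hz.2⟩
    · exact Finset.card_filter_le _ _
  have hint : IntegrableOn (fun z => (1:ℝ) / ((nB S r z : ℝ) * ((nB S r z : ℝ) - 1))) s volume := by
    apply Measure.integrableOn_of_bounded hsfin.ne (measurable_q S r).aestronglyMeasurable
    exact Filter.Eventually.of_forall fun z => by
      rw [Real.norm_eq_abs, abs_of_nonneg (qk_nonneg _)]; exact qk_le_one _
  have hIlow : c * (volume s).toReal ≤
      ∫ z in s, (1:ℝ) / ((nB S r z : ℝ) * ((nB S r z : ℝ) - 1)) := by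
    have := setIntegral_ge_of_const_le_real (measurableSet_closedBall.inter measurableSet_closedBall)
      hsfin.ne hlow hint
    exact this
  have hIpos : 0 < ∫ z in s, (1:ℝ) / ((nB S r z : ℝ) * ((nB S r z : ℝ) - 1)) :=
    lt_of_lt_of_le (mul_pos hcpos (ENNReal.toReal_pos hspos.ne' hsfin.ne)) hIlow
  unfold chiGr
  exact mul_pos (div_pos one_pos hVpos) hIpos

lemma chiGr_zero_of_far {n : ℕ} (S : Finset (Euc n)) (r : ℝ) (x y : Euc n)
    (h : 2 * r < dist x y) : chiGr S r x y = 0 := by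
  have hempty : closedBall x r ∩ closedBall y r = ∅ := by
    ext z
    simp only [Set.mem_inter_iff, mem_closedBall, Set.mem_empty_iff_false, iff_false, not_and]
    intro h1 h2
    have := dist_triangle x z y
    rw [dist_comm x z] at this
    linarith
  unfold chiGr
  rw [hempty, setIntegral_empty, mul_zero]


/-- the sharing coefficient of `f_ν` is nonnegative, and it
vanishes if and only if `d(x,y) ≥ 2α`, provided `ν` is almost everywhere
positive on `[0,α]`. -/

theorem chiFnu_nonneg_eq_zero_iff {n : ℕ} (S : Finset (Euc n)) (α : ℝ) (hα : 0 < α)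
    (ν : ℝ → ℝ) (hνmeas : Measurable ν) (hνnonneg : ∀ r, 0 ≤ ν r)
    (hνsupp : ∀ r, r ∉ Set.Icc (0:ℝ) α → ν r = 0)
    (hνint : (∫ r in (0:ℝ)..α, ν r) = 1)
    (hνpos : ∀ᵐ r ∂(volume.restrict (Set.Icc (0:ℝ) α)), 0 < ν r)
    (x y : Euc n) (hx : x ∈ S) (hy : y ∈ S) (hxy : x ≠ y) :
    0 ≤ (∫ r in (0:ℝ)..α, ν r * chiGr S r x y) ∧
      ((∫ r in (0:ℝ)..α, ν r * chiGr S r x y) = 0 ↔ 2 * α ≤ dist x y) := by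
  have hfnonneg : ∀ r, 0 ≤ ν r * chiGr S r x y :=
    fun r => mul_nonneg (hνnonneg r) (chiGr_nonneg S r x y)
  refine ⟨intervalIntegral.integral_nonneg hα.le fun u _ => hfnonneg u, ?_, ?_⟩
  · -- integral = 0 → 2α ≤ d
    intro h0
    by_contra hd
    push_neg at hd
    have hdpos : 0 < dist x y := dist_pos.mpr hxy
    -- integrability of ν
    have hνInt : IntervalIntegrable ν volume 0 α := by
      by_contra hni
      rw [intervalIntegral.integral_undef hni] at hνint
      exact zero_ne_one hνint
    -- integrability of the product
    have hfmeas : Measurable fun r => ν r * chiGr S r x y :=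
      hνmeas.mul (measurable_chiGr S x y)
    have hfInt : IntervalIntegrable (fun r => ν r * chiGr S r x y) volume 0 α := by
      apply hνInt.mono_fun hfmeas.aestronglyMeasurable.restrict
      apply Filter.Eventually.of_forall
      intro r
      show ‖ν r * chiGr S r x y‖ ≤ ‖ν r‖
      rw [Real.norm_eq_abs, Real.norm_eq_abs, abs_of_nonneg (hfnonneg r),
        abs_of_nonneg (hνnonneg r)]
      calc ν r * chiGr S r x y ≤ ν r * 1 :=
            mul_le_mul_of_nonneg_left (chiGr_le_one S r x y hx) (hνnonneg r)
        _ = ν r := mul_one _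
    rw [intervalIntegral.integral_of_le hα.le] at h0
    have hae0 : (fun r => ν r * chiGr S r x y)
        =ᵐ[volume.restrict (Set.Ioc (0:ℝ) α)] 0 := by
      refine (integral_eq_zero_iff_of_nonneg_ae
        (Filter.Eventually.of_forall hfnonneg) ?_).mp h0
      exact hfInt.1
    -- restrict to Ioo (d/2) α
    have hsub1 : Set.Ioo (dist x y / 2) α ⊆ Set.Ioc (0:ℝ) α := fun r hr =>
      ⟨lt_trans (by linarith) hr.1, hr.2.le⟩
    have hsub2 : Set.Ioo (dist x y / 2) α ⊆ Set.Icc (0:ℝ) α := fun r hr =>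
      ⟨le_of_lt (lt_trans (by linarith) hr.1), hr.2.le⟩
    have h1 := ae_restrict_of_ae_restrict_of_subset hsub1 hae0
    have h2 := ae_restrict_of_ae_restrict_of_subset hsub2 hνpos
    have h3 : ∀ᵐ r ∂(volume.restrict (Set.Ioo (dist x y / 2) α)),
        r ∈ Set.Ioo (dist x y / 2) α := ae_restrict_mem measurableSet_Ioo
    have hfalse : ∀ᵐ r ∂(volume.restrict (Set.Ioo (dist x y / 2) α)), False := by
      filter_upwards [h1, h2, h3] with r hr1 hr2 hr3
      have hrpos : 0 < r := lt_trans (by linarith) hr3.1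
      have hchi : 0 < chiGr S r x y :=
        chiGr_pos S r x y hx hy hxy hrpos (by have := hr3.1; linarith)
      have : 0 < ν r * chiGr S r x y := mul_pos hr2 hchi
      rw [Pi.zero_apply] at hr1
      exact absurd hr1 this.ne'
    rw [Filter.eventually_false_iff_eq_bot, ae_eq_bot, Measure.restrict_eq_zero,
      Real.volume_Ioo] at hfalse
    have : α - dist x y / 2 ≤ 0 := by
      by_contra hpos
      push_neg at hpos
      exact absurd hfalse (ENNReal.ofReal_pos.mpr hpos).ne'
    linarith
  · -- 2α ≤ d → integral = 0
    intro hd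
    -- singletons are null since the space is nontrivial; but we only need r ≠ α a.e.
    have hne : ∀ᵐ r ∂(volume.restrict (Set.Ioc (0:ℝ) α)), r ≠ α := by
      apply ae_restrict_of_ae
      rw [ae_iff]
      have : {a : ℝ | ¬ a ≠ α} = {α} := by ext a; simp
      rw [this]
      exact measure_singleton α
    have hmem : ∀ᵐ r ∂(volume.restrict (Set.Ioc (0:ℝ) α)), r ∈ Set.Ioc (0:ℝ) α :=
      ae_restrict_mem measurableSet_Ioc
    rw [intervalIntegral.integral_of_le hα.le]
    apply integral_eq_zero_of_ae
    filter_upwards [hne, hmem] with r hr1 hr2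
    have hrα : r < α := lt_of_le_of_ne hr2.2 hr1
    have : chiGr S r x y = 0 := chiGr_zero_of_far S r x y (by linarith)
    simp [this]
end

section
/- Let (M,d) be a pseudometric space, let S ⊆ M be a finite subset, let x ∈ S, let y ∈ M∖S, and let r > 0 be a radius such that |r − d(x,z)| > d(x,y) for every z ∈ S. Then x and y are equivalent in the neighborhood graph G_r(S ∪ {y}), i.e., their closed neighborhoods in G_r(S ∪ {y}) coincide. -/
attribute [local instance] Classical.propDecidable

/-- if `r` avoids the forbidden intervals, i.e.
`|r − d(x,z)| > d(x,y)` for every `z ∈ S`, then the added point `y` is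
equivalent to `x` in the neighborhood graph `G_r(S ∪ {y})`: their closed
neighborhoods coincide. -/
theorem clone_equiv_nbhdGraph {M : Type} [PseudoMetricSpace M]
    (S : Finset M) (x : M) (hx : x ∈ S) (y : M) (hy : y ∉ S)
    (r : ℝ) (hr : 0 < r)
    (hsep : ∀ z ∈ S, dist x y < |r - dist x z|) :
    cNbhd (nbhdGraph (insert y S) r) ⟨x, Finset.mem_insert_of_mem hx⟩
      = cNbhd (nbhdGraph (insert y S) r) ⟨y, Finset.mem_insert_self y S⟩ := by
  have hxy : x ≠ y := fun h => hy (h ▸ hx)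
  have hdxy : dist x y < r := by
    have := hsep x hx
    simpa [abs_of_pos hr] using this
  -- key equivalence: for z ∈ S, dist z x ≤ r ↔ dist z y ≤ r
  have key : ∀ z ∈ S, (dist z x ≤ r ↔ dist z y ≤ r) := by
    intro z hz
    have h := hsep z hz
    constructor
    · intro hzx
      have hlt : dist x z < r := by
        rcases lt_or_ge (dist x z) r with h1 | h1
        · exact h1
        · have : |r - dist x z| = dist x z - r := by
            rw [abs_of_nonpos (by linarith)]; ring
          rw [this] at h
          have := dist_nonneg (x := x) (y := y)
          rw [dist_comm] at hzx
          linarith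
      refine le_of_lt ?_
      calc dist z y ≤ dist z x + dist x y := dist_triangle z x y
        _ < dist x z + (r - dist x z) := by
            rw [dist_comm z x]
            have : |r - dist x z| = r - dist x z := abs_of_pos (by linarith)
            linarith [this ▸ h]
        _ = r := by ring
    · intro hzy
      by_contra hzx
      push_neg at hzx
      have habs : |r - dist x z| = dist x z - r := by
        rw [abs_of_nonpos (by rw [dist_comm] at hzx; linarith)]; ring
      rw [habs] at h
      have := dist_triangle z y x
      rw [dist_comm z x, dist_comm y x] at *
      linarith [dist_triangle x y z, dist_comm z y ▸ hzy]
  ext ⟨w, hw⟩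
  have hadjxy : (nbhdGraph (insert y S) r).Adj ⟨x, Finset.mem_insert_of_mem hx⟩
      ⟨y, Finset.mem_insert_self y S⟩ :=
    ⟨by simp [Subtype.ext_iff, hxy], le_of_lt hdxy⟩
  simp only [cNbhd, Set.mem_insert_iff, SimpleGraph.mem_neighborSet]
  rcases Finset.mem_insert.mp hw with hwy | hwS
  · subst hwy
    constructor
    · intro _; left; rfl
    · intro _; right; exact hadjxy
  · by_cases hwx : w = x
    · subst hwx
      constructor
      · intro _; right; exact hadjxy.symm
      · intro _; left; rfl
    · by_cases hwy : w = y
      · subst hwy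
        constructor
        · intro _; left; rfl
        · intro _; right; exact hadjxy
      · have hk := key w hwS
        constructor
        · rintro (hw1 | hw2)
          · exact absurd (congrArg Subtype.val hw1) hwx
          · right
            exact ⟨by simp [Subtype.ext_iff]; exact fun h => hwy h.symm,
              by rw [dist_comm]; exact hk.mp (dist_comm w x ▸ hw2.2)⟩
        · rintro (hw1 | hw2)
          · exact absurd (congrArg Subtype.val hw1) hwy
          · right
            exact ⟨by simp [Subtype.ext_iff]; exact fun h => hwx h.symm,
              by rw [dist_comm]; exact hk.mpr (dist_comm w y ▸ hw2.2)⟩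
end
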